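/- arXiv:2203.12678 — 14 statements merged into one kernel-verified Lean document; each statement's English description precedes it below -/
import Mathlib

section
/- Let {x_1, x_2} be a frame for ℝ². Then for every non-trivial orthogonal projection P on ℝ² (i.e., P ≠ 0 and P ≠ I), the frame {x_1, x_2} is piecewise scalable with projection P: there exist real constants a_1, a_2, b_1, b_2 such that {a_i P x_i + b_i (I−P) x_i}_{i=1}^2 is a Parseval frame for ℝ². -/
open scoped RealInnerProductSpace
open Finset

noncomputable section

/-- A finite family of vectors in `ℝⁿ` is a Parseval frame if
`∑ i, ⟪x, v i⟫² = ‖x‖²` for all `x`. -/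
def IsParseval {n : ℕ} {ι : Type} [Fintype ι] (v : ι → EuclideanSpace ℝ (Fin n)) : Prop :=
  ∀ x : EuclideanSpace ℝ (Fin n), ∑ i, ⟪x, v i⟫ ^ 2 = ‖x‖ ^ 2

/-- `P` is an orthogonal projection: idempotent and self-adjoint. -/
def IsOrthProj {n : ℕ} (P : EuclideanSpace ℝ (Fin n) →ₗ[ℝ] EuclideanSpace ℝ (Fin n)) : Prop :=
  P ∘ₗ P = P ∧ ∀ x y : EuclideanSpace ℝ (Fin n), ⟪P x, y⟫ = ⟪x, P y⟫

set_option maxHeartbeats 1000000 in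
theorem stmt0 (x : Fin 2 → EuclideanSpace ℝ (Fin 2))
    (hframe : Submodule.span ℝ (Set.range x) = ⊤)
    (P : EuclideanSpace ℝ (Fin 2) →ₗ[ℝ] EuclideanSpace ℝ (Fin 2))
    (hP : IsOrthProj P) (hP0 : P ≠ 0) (hPI : P ≠ LinearMap.id) :
    ∃ a b : Fin 2 → ℝ,
      IsParseval (fun i => a i • P (x i) + b i • (x i - P (x i))) := by
  obtain ⟨hPP, hsa⟩ := hP
  have hidem : ∀ y, P (P y) = P y := fun y => LinearMap.ext_iff.mp hPP y
  have hfin : Module.finrank ℝ (EuclideanSpace ℝ (Fin 2)) = 2 := finrank_euclideanSpace_fin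
  have hrk : Module.finrank ℝ (LinearMap.range P) + Module.finrank ℝ (LinearMap.ker P) = 2 := by
    rw [LinearMap.finrank_range_add_finrank_ker, hfin]
  have hr0 : Module.finrank ℝ (LinearMap.range P) ≠ 0 := by
    intro h
    apply hP0
    have hb : LinearMap.range P = ⊥ := Submodule.finrank_eq_zero.mp h
    ext y
    have : P y ∈ LinearMap.range P := LinearMap.mem_range_self P y
    rw [hb, Submodule.mem_bot] at this
    simp [this]
  have hr2 : Module.finrank ℝ (LinearMap.range P) ≠ 2 := by
    intro h
    apply hPI
    have htop : LinearMap.range P = ⊤ := Submodule.eq_top_of_finrank_eq (by rw [h, hfin])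
    ext y
    obtain ⟨z, hz⟩ := LinearMap.range_eq_top.mp htop y
    simp [← hz, hidem]
  have hr1 : Module.finrank ℝ (LinearMap.range P) = 1 := by omega
  have hk1 : Module.finrank ℝ (LinearMap.ker P) = 1 := by omega
  -- get spanning vectors
  obtain ⟨v, hvmem, hv0⟩ := Submodule.exists_mem_ne_zero_of_ne_bot
    (p := LinearMap.range P) (by intro h; rw [h] at hr1; simp at hr1)
  obtain ⟨v', hv'mem, hv'0⟩ := Submodule.exists_mem_ne_zero_of_ne_bot
    (p := LinearMap.ker P) (by intro h; rw [h] at hk1; simp at hk1)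
  have hrange_eq : LinearMap.range P = Submodule.span ℝ {v} := by
    refine (Submodule.eq_of_le_of_finrank_le ?_ ?_).symm
    · rw [Submodule.span_le, Set.singleton_subset_iff]; exact hvmem
    · rw [hr1, finrank_span_singleton hv0]
  have hker_eq : LinearMap.ker P = Submodule.span ℝ {v'} := by
    refine (Submodule.eq_of_le_of_finrank_le ?_ ?_).symm
    · rw [Submodule.span_le, Set.singleton_subset_iff]; exact hv'mem
    · rw [hk1, finrank_span_singleton hv'0]
  obtain ⟨u, hu_def⟩ : ∃ u : EuclideanSpace ℝ (Fin 2), u = ‖v‖⁻¹ • v := ⟨_, rfl⟩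
  obtain ⟨w, hw_def⟩ : ∃ w : EuclideanSpace ℝ (Fin 2), w = ‖v'‖⁻¹ • v' := ⟨_, rfl⟩
  have hnu : ‖u‖ = 1 := by rw [hu_def]; exact norm_smul_inv_norm hv0
  have hnw : ‖w‖ = 1 := by rw [hw_def]; exact norm_smul_inv_norm hv'0
  have huu : ⟪u, u⟫ = 1 := by rw [real_inner_self_eq_norm_sq, hnu]; norm_num
  have hww : ⟪w, w⟫ = 1 := by rw [real_inner_self_eq_norm_sq, hnw]; norm_num
  have hspan_u : ∀ z ∈ LinearMap.range P, z = ⟪u, z⟫ • u := by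
    intro z hz
    rw [hrange_eq, Submodule.mem_span_singleton] at hz
    obtain ⟨t, ht⟩ := hz
    have hz' : z = (t * ‖v‖) • u := by
      rw [hu_def, smul_smul, mul_assoc, mul_inv_cancel₀ (norm_ne_zero_iff.mpr hv0),
        mul_one, ht]
    rw [hz', real_inner_smul_right, huu, mul_one]
  have hspan_w : ∀ z ∈ LinearMap.ker P, z = ⟪w, z⟫ • w := by
    intro z hz
    rw [hker_eq, Submodule.mem_span_singleton] at hz
    obtain ⟨t, ht⟩ := hz
    have hz' : z = (t * ‖v'‖) • w := by
      rw [hw_def, smul_smul, mul_assoc, mul_inv_cancel₀ (norm_ne_zero_iff.mpr hv'0),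
        mul_one, ht]
    rw [hz', real_inner_smul_right, hww, mul_one]
  have hPu : P u = u := by
    obtain ⟨z, hz⟩ := hvmem
    rw [hu_def, map_smul, ← hz, hidem]
  have hPw : P w = 0 := by
    have : P v' = 0 := hv'mem
    rw [hw_def, map_smul, this, smul_zero]
  have hPx : ∀ y, P y = ⟪u, y⟫ • u := by
    intro y
    have h1 := hspan_u (P y) (LinearMap.mem_range_self P y)
    rw [← hsa u y, hPu] at h1
    exact h1
  have hQx : ∀ y, y - P y = ⟪w, y⟫ • w := by
    intro y
    have hmem : y - P y ∈ LinearMap.ker P := by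
      rw [LinearMap.mem_ker, map_sub, hidem, sub_self]
    have h1 := hspan_w _ hmem
    rw [inner_sub_right, ← hsa w y, hPw] at h1
    simpa using h1
  have hdec : ∀ y : EuclideanSpace ℝ (Fin 2), y = ⟪u, y⟫ • u + ⟪w, y⟫ • w := by
    intro y
    rw [← hPx y, ← hQx y]; abel
  have houw : ⟪u, w⟫ = 0 := by
    rw [← hPu, hsa, hPw, inner_zero_right]
  have hwu : ⟪w, u⟫ = 0 := by rw [real_inner_comm, houw]
  have hpar : ∀ y : EuclideanSpace ℝ (Fin 2), ⟪y, u⟫ ^ 2 + ⟪y, w⟫ ^ 2 = ‖y‖ ^ 2 := by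
    intro y
    have h2 : (⟪y, (⟪u, y⟫ : ℝ) • u + (⟪w, y⟫ : ℝ) • w⟫ : ℝ) = ⟪y, y⟫ := by
      rw [← hdec y]
    rw [← real_inner_self_eq_norm_sq y, ← h2, inner_add_right, real_inner_smul_right,
      real_inner_smul_right, real_inner_comm u y, real_inner_comm w y]
    ring
  have humem : u ∈ Submodule.span ℝ (Set.range x) := by rw [hframe]; trivial
  have hwmem : w ∈ Submodule.span ℝ (Set.range x) := by rw [hframe]; trivial
  obtain ⟨f, hf⟩ := (Submodule.mem_span_range_iff_exists_fun ℝ).mp humem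
  obtain ⟨g, hg⟩ := (Submodule.mem_span_range_iff_exists_fun ℝ).mp hwmem
  rw [Fin.sum_univ_two] at hf hg
  have efu : f 0 * ⟪u, x 0⟫ + f 1 * ⟪u, x 1⟫ = 1 := by
    have h := congrArg (fun z : EuclideanSpace ℝ (Fin 2) => (⟪u, z⟫ : ℝ)) hf
    simp only [inner_add_right, real_inner_smul_right, huu] at h
    exact h
  have efw : f 0 * ⟪w, x 0⟫ + f 1 * ⟪w, x 1⟫ = 0 := by
    have h := congrArg (fun z : EuclideanSpace ℝ (Fin 2) => (⟪w, z⟫ : ℝ)) hf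
    simp only [inner_add_right, real_inner_smul_right, hwu] at h
    exact h
  have egu : g 0 * ⟪u, x 0⟫ + g 1 * ⟪u, x 1⟫ = 0 := by
    have h := congrArg (fun z : EuclideanSpace ℝ (Fin 2) => (⟪u, z⟫ : ℝ)) hg
    simp only [inner_add_right, real_inner_smul_right, houw] at h
    exact h
  have egw : g 0 * ⟪w, x 0⟫ + g 1 * ⟪w, x 1⟫ = 1 := by
    have h := congrArg (fun z : EuclideanSpace ℝ (Fin 2) => (⟪w, z⟫ : ℝ)) hg
    simp only [inner_add_right, real_inner_smul_right, hww] at h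
    exact h
  have hkey : (⟪u, x 0⟫ ≠ 0 ∧ ⟪w, x 1⟫ ≠ 0) ∨ (⟪u, x 1⟫ ≠ 0 ∧ ⟪w, x 0⟫ ≠ 0) := by
    by_contra hcon
    rw [not_or] at hcon
    obtain ⟨hA, hB⟩ := hcon
    have h1' : ⟪u, x 0⟫ = 0 ∨ ⟪w, x 1⟫ = 0 := by tauto
    have h2' : ⟪u, x 1⟫ = 0 ∨ ⟪w, x 0⟫ = 0 := by tauto
    have hdet : ⟪u, x 0⟫ * ⟪w, x 1⟫ - ⟪u, x 1⟫ * ⟪w, x 0⟫ = 0 := by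
      rcases h1' with hz1 | hz1 <;> rcases h2' with hz2 | hz2 <;> rw [hz1, hz2] <;> ring
    have key : (f 0 * ⟪u, x 0⟫ + f 1 * ⟪u, x 1⟫) * (g 0 * ⟪w, x 0⟫ + g 1 * ⟪w, x 1⟫)
        - (g 0 * ⟪u, x 0⟫ + g 1 * ⟪u, x 1⟫) * (f 0 * ⟪w, x 0⟫ + f 1 * ⟪w, x 1⟫)
        = (f 0 * g 1 - g 0 * f 1) * (⟪u, x 0⟫ * ⟪w, x 1⟫ - ⟪u, x 1⟫ * ⟪w, x 0⟫) := by ring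
    rw [efu, efw, egu, egw, hdet, mul_zero] at key
    norm_num at key
  rcases hkey with ⟨hc0, hd1⟩ | ⟨hc1, hd0⟩
  · refine ⟨![(⟪u, x 0⟫ : ℝ)⁻¹, 0], ![0, (⟪w, x 1⟫ : ℝ)⁻¹], ?_⟩
    intro y
    have h0 : (⟪u, x 0⟫ : ℝ)⁻¹ • P (x 0) + (0 : ℝ) • (x 0 - P (x 0)) = u := by
      rw [hPx (x 0), zero_smul, add_zero, smul_smul, inv_mul_cancel₀ hc0, one_smul]
    have h1 : (0 : ℝ) • P (x 1) + (⟪w, x 1⟫ : ℝ)⁻¹ • (x 1 - P (x 1)) = w := by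
      rw [hQx (x 1), zero_smul, zero_add, smul_smul, inv_mul_cancel₀ hd1, one_smul]
    simp only [Fin.sum_univ_two, Matrix.cons_val_zero, Matrix.cons_val_one, Matrix.head_cons]
    rw [h0, h1]
    exact hpar y
  · refine ⟨![0, (⟪u, x 1⟫ : ℝ)⁻¹], ![(⟪w, x 0⟫ : ℝ)⁻¹, 0], ?_⟩
    intro y
    have h0 : (0 : ℝ) • P (x 0) + (⟪w, x 0⟫ : ℝ)⁻¹ • (x 0 - P (x 0)) = w := by
      rw [hQx (x 0), zero_smul, zero_add, smul_smul, inv_mul_cancel₀ hd0, one_smul]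
    have h1 : (⟪u, x 1⟫ : ℝ)⁻¹ • P (x 1) + (0 : ℝ) • (x 1 - P (x 1)) = u := by
      rw [hPx (x 1), zero_smul, add_zero, smul_smul, inv_mul_cancel₀ hc1, one_smul]
    simp only [Fin.sum_univ_two, Matrix.cons_val_zero, Matrix.cons_val_one, Matrix.head_cons]
    rw [h0, h1]
    linarith [hpar y]
end
end

section
/- Let {x_i}_{i=1}^m be a frame for ℝⁿ, let P be an orthogonal projection on ℝⁿ, and let a_1,...,a_m, b_1,...,b_m be real constants. Then {a_i P x_i + b_i (I−P) x_i}_{i=1}^m is a Parseval frame for ℝⁿ if and only if the following two conditions hold: (a) {a_i P x_i}_{i=1}^m is a Parseval frame for the range of P and {b_i (I−P) x_i}_{i=1}^m is a Parseval frame for the range of I−P; and (b) for all x ∈ ℝⁿ, Σ_{i=1}^m a_i b_i ⟨x, P x_i⟩ ⟨x, (I−P) x_i⟩ = 0. -/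
open scoped RealInnerProductSpace
open Finset

noncomputable section

/-- A family of vectors is a Parseval frame for a subspace `Y` if
`∑ i, ⟪y, v i⟫² = ‖y‖²` for all `y ∈ Y`. -/
def IsParsevalOn {n : ℕ} {ι : Type} [Fintype ι] (Y : Submodule ℝ (EuclideanSpace ℝ (Fin n)))
    (v : ι → EuclideanSpace ℝ (Fin n)) : Prop :=
  ∀ y ∈ Y, ∑ i, ⟪y, v i⟫ ^ 2 = ‖y‖ ^ 2

theorem stmt1 {m n : ℕ} (x : Fin m → EuclideanSpace ℝ (Fin n))
    (hframe : Submodule.span ℝ (Set.range x) = ⊤)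
    (P : EuclideanSpace ℝ (Fin n) →ₗ[ℝ] EuclideanSpace ℝ (Fin n))
    (hP : IsOrthProj P) (a b : Fin m → ℝ) :
    IsParseval (fun i => a i • P (x i) + b i • (x i - P (x i))) ↔
      (IsParsevalOn (LinearMap.range P) (fun i => a i • P (x i)) ∧
        IsParsevalOn (LinearMap.range (LinearMap.id - P))
          (fun i => b i • (x i - P (x i)))) ∧
      ∀ y : EuclideanSpace ℝ (Fin n),
        ∑ i, a i * b i * ⟪y, P (x i)⟫ * ⟪y, x i - P (x i)⟫ = 0 := by
  obtain ⟨hP2, hPs⟩ := hP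
  have hPP : ∀ z, P (P z) = P z := fun z => LinearMap.ext_iff.mp hP2 z
  have key1 : ∀ y z : EuclideanSpace ℝ (Fin n), ⟪y, P z⟫ = ⟪P y, P z⟫ := by
    intro y z
    calc ⟪y, P z⟫ = ⟪y, P (P z)⟫ := by rw [hPP]
    _ = ⟪P y, P z⟫ := (hPs y (P z)).symm
  have key2 : ∀ y z : EuclideanSpace ℝ (Fin n), ⟪y, z - P z⟫ = ⟪y - P y, z - P z⟫ := by
    intro y z
    have h1 : ⟪P y, z - P z⟫ = 0 := by
      rw [inner_sub_right, hPs, hPs, hPP, sub_self]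
    rw [inner_sub_left, h1, sub_zero]
  have pyth : ∀ y : EuclideanSpace ℝ (Fin n), ‖P y‖^2 + ‖y - P y‖^2 = ‖y‖^2 := by
    intro y
    have horth : ⟪P y, y - P y⟫ = 0 := by
      rw [inner_sub_right, hPs, hPs, hPP, sub_self]
    have hsum : P y + (y - P y) = y := by abel
    have hns := norm_add_sq_real (P y) (y - P y)
    rw [hsum, horth] at hns
    linarith
  have expand : ∀ y : EuclideanSpace ℝ (Fin n),
      ∑ i, ⟪y, a i • P (x i) + b i • (x i - P (x i))⟫^2 =
      (∑ i, ⟪y, a i • P (x i)⟫^2) + (∑ i, ⟪y, b i • (x i - P (x i))⟫^2)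
      + 2 * ∑ i, a i * b i * ⟪y, P (x i)⟫ * ⟪y, x i - P (x i)⟫ := by
    intro y
    rw [Finset.mul_sum, ← Finset.sum_add_distrib, ← Finset.sum_add_distrib]
    refine Finset.sum_congr rfl fun i _ => ?_
    simp only [inner_add_right, real_inner_smul_right]
    ring
  have sA : ∀ y : EuclideanSpace ℝ (Fin n),
      ∑ i, ⟪y, a i • P (x i)⟫^2 = ∑ i, ⟪P y, a i • P (x i)⟫^2 := by
    intro y
    refine Finset.sum_congr rfl fun i _ => ?_
    rw [real_inner_smul_right, real_inner_smul_right, key1]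
  have sB : ∀ y : EuclideanSpace ℝ (Fin n),
      ∑ i, ⟪y, b i • (x i - P (x i))⟫^2 = ∑ i, ⟪y - P y, b i • (x i - P (x i))⟫^2 := by
    intro y
    refine Finset.sum_congr rfl fun i _ => ?_
    rw [real_inner_smul_right, real_inner_smul_right, key2]
  constructor
  · intro h
    have ha : IsParsevalOn (LinearMap.range P) (fun i => a i • P (x i)) := by
      rintro y ⟨z, rfl⟩
      have h0 : ∀ i, ⟪(P z : EuclideanSpace ℝ (Fin n)), b i • (x i - P (x i))⟫ = 0 := by
        intro i
        rw [real_inner_smul_right, key2, hPP, sub_self, inner_zero_left, mul_zero]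
      have hz := h (P z)
      simpa [inner_add_right, h0] using hz
    have hb : IsParsevalOn (LinearMap.range (LinearMap.id - P))
        (fun i => b i • (x i - P (x i))) := by
      rintro y ⟨z, rfl⟩
      simp only [LinearMap.sub_apply, LinearMap.id_apply]
      have h0 : ∀ i, ⟪z - P z, a i • P (x i)⟫ = 0 := by
        intro i
        rw [real_inner_smul_right, key1, map_sub, hPP, sub_self, inner_zero_left, mul_zero]
      have hz := h (z - P z)
      simpa [inner_add_right, h0] using hz
    refine ⟨⟨ha, hb⟩, fun y => ?_⟩
    have hy := h y
    rw [expand] at hy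
    have hA : ∑ i, ⟪y, a i • P (x i)⟫^2 = ‖P y‖^2 := by
      rw [sA]; exact ha (P y) ⟨y, rfl⟩
    have hB : ∑ i, ⟪y, b i • (x i - P (x i))⟫^2 = ‖y - P y‖^2 := by
      rw [sB]; exact hb (y - P y) ⟨y, by simp [LinearMap.sub_apply]⟩
    have hp := pyth y
    rw [hA, hB] at hy
    linarith
  · rintro ⟨⟨ha, hb⟩, hc⟩ y
    rw [expand, sA, sB, ha (P y) ⟨y, rfl⟩, hb (y - P y) ⟨y, by simp [LinearMap.sub_apply]⟩,
      hc y, mul_zero, add_zero, pyth]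
end
end

section
/- Let {x_i}_{i=1}^m be a frame for ℝⁿ that is piecewise scalable with an orthogonal projection P, i.e., there exist real constants a_1,...,a_m, b_1,...,b_m such that {a_i P x_i + b_i (I−P) x_i}_{i=1}^m is a Parseval frame for ℝⁿ. Then the family of 2m vectors {P x_1, ..., P x_m, (I−P) x_1, ..., (I−P) x_m} is a scalable frame for ℝⁿ: there exist 2m real constants making the corresponding scaled family a Parseval frame for ℝⁿ. -/
open scoped RealInnerProductSpace
open Finset

noncomputable section

theorem stmt2 {m n : ℕ} (x : Fin m → EuclideanSpace ℝ (Fin n))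
    (hframe : Submodule.span ℝ (Set.range x) = ⊤)
    (P : EuclideanSpace ℝ (Fin n) →ₗ[ℝ] EuclideanSpace ℝ (Fin n))
    (hP : IsOrthProj P) (a b : Fin m → ℝ)
    (hpar : IsParseval (fun i => a i • P (x i) + b i • (x i - P (x i)))) :
    ∃ c : Fin m ⊕ Fin m → ℝ,
      IsParseval (fun i =>
        c i • Sum.elim (fun j => P (x j)) (fun j => x j - P (x j)) i) := by
  obtain ⟨hidem, hsa⟩ := hP
  have hPP : ∀ y, P (P y) = P y := fun y => congrFun (congrArg DFunLike.coe hidem) y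
  refine ⟨Sum.elim a b, fun z => ?_⟩
  have h1 := hpar (P z)
  have h2 := hpar (z - P z)
  -- simplify inner products in h1
  have e1 : ∀ j, ⟪P z, a j • P (x j) + b j • (x j - P (x j))⟫ = a j * ⟪z, P (x j)⟫ := by
    intro j
    rw [inner_add_right, inner_smul_right, inner_smul_right, inner_sub_right]
    have hA : ⟪P z, P (x j)⟫ = ⟪z, P (x j)⟫ := by rw [hsa, hPP]
    have hB : ⟪P z, x j⟫ = ⟪z, P (x j)⟫ := hsa z (x j)
    rw [hA, hB]; ring
  have e2 : ∀ j, ⟪z - P z, a j • P (x j) + b j • (x j - P (x j))⟫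
      = b j * ⟪z, x j - P (x j)⟫ := by
    intro j
    rw [inner_add_right, inner_smul_right, inner_smul_right, inner_sub_right,
      inner_sub_left, inner_sub_left, inner_sub_right]
    have hA : ⟪P z, P (x j)⟫ = ⟪z, P (x j)⟫ := by rw [hsa, hPP]
    have hB : ⟪P z, x j⟫ = ⟪z, P (x j)⟫ := hsa z (x j)
    rw [hA, hB]; ring
  simp only [e1, e2] at h1 h2
  have hnorm : ‖z‖ ^ 2 = ‖P z‖ ^ 2 + ‖z - P z‖ ^ 2 := by
    have horth : ⟪P z, z - P z⟫ = 0 := by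
      rw [inner_sub_right]
      have : ⟪P z, P z⟫ = ⟪P z, z⟫ := by rw [hsa, hPP, ← hsa]
      rw [this]; ring
    have hz : z = P z + (z - P z) := by abel
    calc ‖z‖ ^ 2 = ‖P z + (z - P z)‖ ^ 2 := by rw [← hz]
      _ = ‖P z‖ ^ 2 + 2 * ⟪P z, z - P z⟫ + ‖z - P z‖ ^ 2 := by
          rw [@norm_add_sq_real]
      _ = ‖P z‖ ^ 2 + ‖z - P z‖ ^ 2 := by rw [horth]; ring
  rw [hnorm, ← h1, ← h2, Fintype.sum_sum_type]
  congr 1 <;> apply Finset.sum_congr rfl <;> intro j _ <;>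
    simp [inner_smul_right, mul_pow]
end
end

section
/- Let {x_i}_{i=1}^m be a frame for ℝⁿ. Suppose there exist an orthogonal projection P on ℝⁿ and a subset I ⊂ {1,...,m} such that {P x_i}_{i∈I} is scalable in the range of P (i.e., there exist constants {a_i}_{i∈I} such that {a_i P x_i}_{i∈I} is a Parseval frame for the range of P) and {(I−P) x_i}_{i∈I^c} is scalable in the range of I−P (i.e., there exist constants {b_i}_{i∈I^c} such that {b_i (I−P) x_i}_{i∈I^c} is a Parseval frame for the range of I−P). Then {x_i}_{i=1}^m is piecewise scalable: there exist real constants a_1,...,a_m, b_1,...,b_m such that {a_i P x_i + b_i (I−P) x_i}_{i=1}^m is a Parseval frame for ℝⁿ. -/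
open scoped RealInnerProductSpace
open Finset

noncomputable section

theorem stmt3 {m n : ℕ} (x : Fin m → EuclideanSpace ℝ (Fin n))
    (hframe : Submodule.span ℝ (Set.range x) = ⊤)
    (P : EuclideanSpace ℝ (Fin n) →ₗ[ℝ] EuclideanSpace ℝ (Fin n))
    (hP : IsOrthProj P) (I : Finset (Fin m)) (a b : Fin m → ℝ)
    (ha : ∀ y ∈ LinearMap.range P, ∑ i ∈ I, ⟪y, a i • P (x i)⟫ ^ 2 = ‖y‖ ^ 2)
    (hb : ∀ y ∈ LinearMap.range (LinearMap.id - P),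
      ∑ i ∈ Iᶜ, ⟪y, b i • (x i - P (x i))⟫ ^ 2 = ‖y‖ ^ 2) :
    ∃ a' b' : Fin m → ℝ,
      IsParseval (fun i => a' i • P (x i) + b' i • (x i - P (x i))) := by
  refine ⟨fun i => if i ∈ I then a i else 0, fun i => if i ∈ I then 0 else b i, ?_⟩
  intro y
  have hPP : ∀ v, P (P v) = P v := fun v => LinearMap.ext_iff.mp hP.1 v
  have horth : ∀ u v : EuclideanSpace ℝ (Fin n), ⟪P u, v - P v⟫ = 0 := fun u v => by
    rw [hP.2, map_sub, hPP, sub_self, inner_zero_right]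
  have key1 : ∀ v, ⟪y, P v⟫ = ⟪P y, P v⟫ := fun v => by
    rw [hP.2, hPP]
  have key2 : ∀ v, ⟪y, v - P v⟫ = ⟪y - P y, v - P v⟫ := fun v => by
    rw [inner_sub_left, horth, sub_zero]
  have hsplit :
      (∑ i, ⟪y, (if i ∈ I then a i else 0) • P (x i)
          + (if i ∈ I then 0 else b i) • (x i - P (x i))⟫ ^ 2)
        = (∑ i ∈ I, ⟪P y, a i • P (x i)⟫ ^ 2)
          + ∑ i ∈ Iᶜ, ⟪y - P y, b i • (x i - P (x i))⟫ ^ 2 := by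
    rw [← Finset.sum_add_sum_compl I]
    congr 1
    · refine Finset.sum_congr rfl fun i hi => ?_
      rw [if_pos hi, if_pos hi, zero_smul, add_zero, inner_smul_right, inner_smul_right, key1]
    · refine Finset.sum_congr rfl fun i hi => ?_
      rw [Finset.mem_compl] at hi
      rw [if_neg hi, if_neg hi, zero_smul, zero_add, inner_smul_right, inner_smul_right, key2]
  have hPy : P y ∈ LinearMap.range P := ⟨y, rfl⟩
  have hQy : y - P y ∈ LinearMap.range (LinearMap.id - P) := ⟨y, by simp⟩
  have hnorm : ‖P y‖ ^ 2 + ‖y - P y‖ ^ 2 = ‖y‖ ^ 2 := by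
    have h := norm_add_sq_real (P y) (y - P y)
    rw [add_sub_cancel, horth] at h
    linarith
  simp only [hsplit, ha (P y) hPy, hb (y - P y) hQy, hnorm]
end
end

section
/- Let {x_i}_{i=1}^m be a frame for ℝⁿ. Suppose there exist a subset I ⊂ {1,...,m} of size n−1 and an orthogonal projection P on ℝⁿ of rank n−1 such that {P x_i}_{i∈I} is an orthogonal set of nonzero vectors and (I−P) x_j ≠ 0 for some j ∉ I. Then {x_i}_{i=1}^m is piecewise scalable: there exist real constants a_1,...,a_m, b_1,...,b_m such that {a_i P x_i + b_i (I−P) x_i}_{i=1}^m is a Parseval frame for ℝⁿ. -/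
/-!
Normalise `P xᵢ` for `i ∈ I` and `(1 - P) xⱼ`. The first `n - 1` vectors are orthonormal in
`range P` and the last one is a unit vector in `(range P)ᗮ`, so together they form an orthonormal
basis of `ℝⁿ`. Taking all other coefficients `aᵢ, bᵢ` equal to zero, the scaled family is this
basis padded with zero vectors, hence a Parseval frame.
-/

open scoped RealInnerProductSpace
open Finset

noncomputable section

section OrthonormalFamily

variable {E : Type*} [NormedAddCommGroup E] [InnerProductSpace ℝ E]

theorem orthonormal_inv_norm_smul {ι : Type*} {w : ι → E} (hw : ∀ i, w i ≠ 0)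
    (horth : Pairwise fun i k => ⟪w i, w k⟫ = 0) :
    Orthonormal ℝ fun i => ‖w i‖⁻¹ • w i := by
  refine ⟨fun i => norm_smul_inv_norm (𝕜 := ℝ) (hw i), fun i k hik => ?_⟩
  simp only
  rw [real_inner_smul_left, real_inner_smul_right, horth hik, mul_zero, mul_zero]

variable [FiniteDimensional ℝ E]

theorem Orthonormal.sum_sq_inner_of_card_eq_finrank {ι : Type*} [Fintype ι] {v : ι → E}
    (hv : Orthonormal ℝ v) (hcard : Fintype.card ι = Module.finrank ℝ E) (x : E) :
    ∑ i, ⟪x, v i⟫ ^ 2 = ‖x‖ ^ 2 := by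
  let b := OrthonormalBasis.mk hv (hv.linearIndependent.span_eq_top_of_card_eq_finrank' hcard).ge
  simpa [b] using b.sum_sq_inner_left x

theorem sum_sq_inner_of_orthonormal_on {ι : Type*} [Fintype ι] {v : ι → E} {S : Finset ι}
    (hv : Orthonormal ℝ fun i : S => v i) (hcard : #S = Module.finrank ℝ E)
    (hzero : ∀ i ∉ S, v i = 0) (x : E) :
    ∑ i, ⟪x, v i⟫ ^ 2 = ‖x‖ ^ 2 := by
  rw [← sum_subset (subset_univ S) fun i _ hi => by simp [hzero i hi], ← sum_coe_sort]
  exact hv.sum_sq_inner_of_card_eq_finrank (by simpa using hcard) x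

end OrthonormalFamily

namespace IsOrthProj

variable {n : ℕ} {P : EuclideanSpace ℝ (Fin n) →ₗ[ℝ] EuclideanSpace ℝ (Fin n)}

theorem apply_apply (hP : IsOrthProj P) (y : EuclideanSpace ℝ (Fin n)) : P (P y) = P y :=
  LinearMap.congr_fun hP.1 y

theorem inner_apply_sub_apply (hP : IsOrthProj P) (u y : EuclideanSpace ℝ (Fin n)) :
    ⟪P u, y - P y⟫ = 0 := by
  rw [hP.2, map_sub, hP.apply_apply, sub_self, inner_zero_right]

end IsOrthProj

section SplitPiece

variable {n : ℕ} {ι : Type*} [DecidableEq ι]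

def splitPiece (P : EuclideanSpace ℝ (Fin n) →ₗ[ℝ] EuclideanSpace ℝ (Fin n))
    (I : Finset ι) (x : ι → EuclideanSpace ℝ (Fin n)) (i : ι) : EuclideanSpace ℝ (Fin n) :=
  if i ∈ I then P (x i) else x i - P (x i)

variable {P : EuclideanSpace ℝ (Fin n) →ₗ[ℝ] EuclideanSpace ℝ (Fin n)} {I : Finset ι}
  {x : ι → EuclideanSpace ℝ (Fin n)}

theorem splitPiece_ne_zero (hne : ∀ i ∈ I, P (x i) ≠ 0) {j : ι} (hjI : j ∉ I)
    (hjne : x j - P (x j) ≠ 0) {i : ι} (hi : i ∈ insert j I) :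
    splitPiece P I x i ≠ 0 := by
  rcases mem_insert.1 hi with rfl | hiI
  · simpa [splitPiece, hjI] using hjne
  · simpa [splitPiece, hiI] using hne i hiI

theorem inner_splitPiece_eq_zero (hP : IsOrthProj P)
    (horth : ∀ i ∈ I, ∀ j ∈ I, i ≠ j → ⟪P (x i), P (x j)⟫ = 0)
    {j i k : ι} (hi : i ∈ insert j I) (hk : k ∈ insert j I) (hik : i ≠ k) :
    ⟪splitPiece P I x i, splitPiece P I x k⟫ = 0 := by
  unfold splitPiece
  by_cases hiI : i ∈ I <;> by_cases hkI : k ∈ I <;> simp only [hiI, hkI, if_true, if_false]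
  · exact horth i hiI k hkI hik
  · exact hP.inner_apply_sub_apply _ _
  · rw [real_inner_comm]; exact hP.inner_apply_sub_apply _ _
  · exact absurd (((mem_insert.1 hi).resolve_right hiI).trans
      ((mem_insert.1 hk).resolve_right hkI).symm) hik

end SplitPiece

theorem stmt4_general {m n : ℕ} (x : Fin m → EuclideanSpace ℝ (Fin n))
    (P : EuclideanSpace ℝ (Fin n) →ₗ[ℝ] EuclideanSpace ℝ (Fin n))
    (hP : IsOrthProj P)
    (I : Finset (Fin m)) (hcard : I.card = n - 1)
    (hne : ∀ i ∈ I, P (x i) ≠ 0)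
    (horth : ∀ i ∈ I, ∀ j ∈ I, i ≠ j → ⟪P (x i), P (x j)⟫ = 0)
    (hj : ∃ j ∉ I, x j - P (x j) ≠ 0) :
    ∃ a b : Fin m → ℝ,
      IsParseval (fun i => a i • P (x i) + b i • (x i - P (x i))) := by
  obtain ⟨j, hjI, hjne⟩ := hj
  set w := splitPiece P I x
  have hpos : 0 < n := Nat.pos_of_ne_zero fun h => hjne (by subst h; exact Subsingleton.elim _ _)
  refine ⟨fun i => if i ∈ I then ‖w i‖⁻¹ else 0, fun i => if i = j then ‖w i‖⁻¹ else 0,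
    sum_sq_inner_of_orthonormal_on (S := insert j I) ?_ ?_ ?_⟩
  · convert orthonormal_inv_norm_smul (w := fun i : ↥(insert j I) => w i)
      (fun i => splitPiece_ne_zero hne hjI hjne i.2)
      (fun i k hik => inner_splitPiece_eq_zero hP horth i.2 k.2 (Subtype.coe_ne_coe.2 hik))
      using 2 with i
    rcases mem_insert.1 i.2 with hij | hiI
    · simp [w, splitPiece, hij, hjI]
    · simp [w, splitPiece, hiI, show (i : Fin m) ≠ j from fun h => hjI (h ▸ hiI)]
  · rw [card_insert_of_notMem hjI, hcard, finrank_euclideanSpace_fin]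
    omega
  · intro i hi
    obtain ⟨hij, hiI⟩ := not_or.1 (mem_insert.not.1 hi)
    simp [hij, hiI]

theorem stmt4 {m n : ℕ} (x : Fin m → EuclideanSpace ℝ (Fin n))
    (hframe : Submodule.span ℝ (Set.range x) = ⊤)
    (P : EuclideanSpace ℝ (Fin n) →ₗ[ℝ] EuclideanSpace ℝ (Fin n))
    (hP : IsOrthProj P)
    (hrank : Module.finrank ℝ (LinearMap.range P) = n - 1)
    (I : Finset (Fin m)) (hcard : I.card = n - 1)
    (hne : ∀ i ∈ I, P (x i) ≠ 0)
    (horth : ∀ i ∈ I, ∀ j ∈ I, i ≠ j → ⟪P (x i), P (x j)⟫ = 0)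
    (hj : ∃ j ∉ I, x j - P (x j) ≠ 0) :
    ∃ a b : Fin m → ℝ,
      IsParseval (fun i => a i • P (x i) + b i • (x i - P (x i))) :=
  stmt4_general x P hP I hcard hne horth hj
end
end

section
/- Let {x_i}_{i=1}^m be a frame for ℝⁿ, let P be an orthogonal projection on ℝⁿ, and let a_1,...,a_m, b_1,...,b_m be real constants. Then {a_i P x_i + b_i (I−P) x_i}_{i=1}^m is a Parseval frame for ℝⁿ if and only if the following four identities hold for all x ∈ ℝⁿ: (i) Σ_{i=1}^m a_i² ⟨x, P x_i⟩ P x_i = P x; (ii) Σ_{i=1}^m b_i² ⟨x, (I−P) x_i⟩ (I−P) x_i = (I−P) x; (iii) Σ_{i=1}^m a_i b_i ⟨x, (I−P) x_i⟩ P x_i = 0; (iv) Σ_{i=1}^m a_i b_i ⟨x, P x_i⟩ (I−P) x_i = 0. -/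
open scoped RealInnerProductSpace
open Finset

noncomputable section

lemma parseval_frameop {m n : ℕ} (v : Fin m → EuclideanSpace ℝ (Fin n))
    (h : ∀ y : EuclideanSpace ℝ (Fin n), ∑ i, ⟪y, v i⟫ ^ 2 = ‖y‖ ^ 2) :
    ∀ y : EuclideanSpace ℝ (Fin n), ∑ i, ⟪y, v i⟫ • v i = y := by
  have key : ∀ p q : EuclideanSpace ℝ (Fin n),
      ∑ i, ⟪p, v i⟫ * ⟪q, v i⟫ = ⟪p, q⟫ := by
    intro p q
    have h1 := h (p + q)
    have h2 := h p
    have h3 := h q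
    have hnorm : ‖p + q‖ ^ 2 = ‖p‖ ^ 2 + 2 * ⟪p, q⟫ + ‖q‖ ^ 2 := norm_add_sq_real p q
    have e : ∑ i, ⟪p, v i⟫ * ⟪q, v i⟫
        = ∑ i, ((⟪p + q, v i⟫ ^ 2 - ⟪p, v i⟫ ^ 2 - ⟪q, v i⟫ ^ 2) / 2) := by
      refine Finset.sum_congr rfl fun i _ => ?_
      rw [inner_add_left]; ring
    rw [e]
    rw [← Finset.sum_div, Finset.sum_sub_distrib, Finset.sum_sub_distrib, h1, h2, h3]
    rw [hnorm]; ring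
  intro y
  apply ext_inner_right ℝ
  intro z
  rw [sum_inner]
  have : ∑ i, ⟪⟪y, v i⟫ • v i, z⟫ = ∑ i, ⟪y, v i⟫ * ⟪z, v i⟫ := by
    refine Finset.sum_congr rfl fun i _ => ?_
    rw [real_inner_smul_left, real_inner_comm (v i) z]
  rw [this, key]

theorem stmt5 {m n : ℕ} (x : Fin m → EuclideanSpace ℝ (Fin n))
    (hframe : Submodule.span ℝ (Set.range x) = ⊤)
    (P : EuclideanSpace ℝ (Fin n) →ₗ[ℝ] EuclideanSpace ℝ (Fin n))
    (hP : IsOrthProj P) (a b : Fin m → ℝ) :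
    IsParseval (fun i => a i • P (x i) + b i • (x i - P (x i))) ↔
      (∀ y : EuclideanSpace ℝ (Fin n),
        ∑ i, (a i ^ 2 * ⟪y, P (x i)⟫) • P (x i) = P y) ∧
      (∀ y : EuclideanSpace ℝ (Fin n),
        ∑ i, (b i ^ 2 * ⟪y, x i - P (x i)⟫) • (x i - P (x i)) = y - P y) ∧
      (∀ y : EuclideanSpace ℝ (Fin n),
        ∑ i, (a i * b i * ⟪y, x i - P (x i)⟫) • P (x i) = 0) ∧
      (∀ y : EuclideanSpace ℝ (Fin n),
        ∑ i, (a i * b i * ⟪y, P (x i)⟫) • (x i - P (x i)) = 0) := by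
  set u : Fin m → EuclideanSpace ℝ (Fin n) := fun i => a i • P (x i) with hu
  set w : Fin m → EuclideanSpace ℝ (Fin n) := fun i => b i • (x i - P (x i)) with hw
  have hPP : ∀ z, P (P z) = P z := fun z => LinearMap.congr_fun hP.1 z
  have hPu : ∀ i, P (u i) = u i := by
    intro i; simp only [hu, map_smul, hPP]
  have hPw : ∀ i, P (w i) = 0 := by
    intro i; simp only [hw, map_smul, map_sub, hPP, sub_self, smul_zero]
  have hinnPu : ∀ (y : EuclideanSpace ℝ (Fin n)) i, ⟪P y, u i⟫ = ⟪y, u i⟫ := by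
    intro y i; rw [hP.2, hPu]
  have hinnPw : ∀ (y : EuclideanSpace ℝ (Fin n)) i, ⟪P y, w i⟫ = 0 := by
    intro y i; rw [hP.2, hPw, inner_zero_right]
  -- scalar rewrites
  have cuu : ∀ (y : EuclideanSpace ℝ (Fin n)) i,
      ⟪y, u i⟫ • u i = (a i ^ 2 * ⟪y, P (x i)⟫) • P (x i) := by
    intro y i
    simp only [hu, real_inner_smul_right, smul_smul]
    congr 1; ring
  have cww : ∀ (y : EuclideanSpace ℝ (Fin n)) i,
      ⟪y, w i⟫ • w i = (b i ^ 2 * ⟪y, x i - P (x i)⟫) • (x i - P (x i)) := by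
    intro y i
    simp only [hw, real_inner_smul_right, smul_smul]
    congr 1; ring
  have cwu : ∀ (y : EuclideanSpace ℝ (Fin n)) i,
      ⟪y, w i⟫ • u i = (a i * b i * ⟪y, x i - P (x i)⟫) • P (x i) := by
    intro y i
    simp only [hu, hw, real_inner_smul_right, smul_smul]
    congr 1; ring
  have cuw : ∀ (y : EuclideanSpace ℝ (Fin n)) i,
      ⟪y, u i⟫ • w i = (a i * b i * ⟪y, P (x i)⟫) • (x i - P (x i)) := by
    intro y i
    simp only [hu, hw, real_inner_smul_right, smul_smul]
    congr 1; ring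
  constructor
  · intro hpar
    have hS : ∀ y : EuclideanSpace ℝ (Fin n),
        ∑ i, ⟪y, u i + w i⟫ • (u i + w i) = y := parseval_frameop _ hpar
    -- from y := P y₀
    have key1 : ∀ y : EuclideanSpace ℝ (Fin n),
        (∑ i, ⟪y, u i⟫ • u i) + (∑ i, ⟪y, u i⟫ • w i) = P y := by
      intro y
      have := hS (P y)
      simp only [inner_add_right, hinnPu, hinnPw, add_zero, smul_add] at this
      rw [Finset.sum_add_distrib] at this
      exact this
    have key2 : ∀ y : EuclideanSpace ℝ (Fin n),
        (∑ i, ⟪y, w i⟫ • u i) + (∑ i, ⟪y, w i⟫ • w i) = y - P y := by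
      intro y
      have := hS (y - P y)
      have hin1 : ∀ i, ⟪y - P y, u i⟫ = 0 := by
        intro i; rw [inner_sub_left, hinnPu, sub_self]
      have hin2 : ∀ i, ⟪y - P y, w i⟫ = ⟪y, w i⟫ := by
        intro i; rw [inner_sub_left, hinnPw, sub_zero]
      simp only [inner_add_right, hin1, hin2, zero_add, smul_add] at this
      rw [Finset.sum_add_distrib] at this
      exact this
    have Pkey1 : ∀ y : EuclideanSpace ℝ (Fin n), (∑ i, ⟪y, u i⟫ • u i) = P y := by
      intro y
      have := congrArg P (key1 y)
      simp only [map_add, map_sum, map_smul, hPu, hPw, smul_zero,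
        Finset.sum_const_zero, add_zero, hPP] at this
      exact this
    have Pkey2 : ∀ y : EuclideanSpace ℝ (Fin n), (∑ i, ⟪y, w i⟫ • u i) = 0 := by
      intro y
      have := congrArg P (key2 y)
      simp only [map_add, map_sub, map_sum, map_smul, hPu, hPw, smul_zero,
        Finset.sum_const_zero, add_zero, hPP, sub_self] at this
      exact this
    refine ⟨fun y => ?_, fun y => ?_, fun y => ?_, fun y => ?_⟩
    · rw [← Finset.sum_congr rfl fun i _ => cuu y i]
      exact Pkey1 y
    · rw [← Finset.sum_congr rfl fun i _ => cww y i]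
      have := key2 y
      rw [Pkey2 y, zero_add] at this
      exact this
    · rw [← Finset.sum_congr rfl fun i _ => cwu y i]
      exact Pkey2 y
    · rw [← Finset.sum_congr rfl fun i _ => cuw y i]
      have := key1 y
      rw [Pkey1 y] at this
      exact (add_eq_left.mp this)
  · rintro ⟨h1, h2, h3, h4⟩
    intro y
    have hsum : ∑ i, ⟪y, u i + w i⟫ • (u i + w i) = y := by
      have expand : ∀ i : Fin m, ⟪y, u i + w i⟫ • (u i + w i)
          = ⟪y, u i⟫ • u i + ⟪y, u i⟫ • w i + ⟪y, w i⟫ • u i + ⟪y, w i⟫ • w i := by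
        intro i
        rw [inner_add_right, add_smul, smul_add, smul_add]
        abel
      rw [Finset.sum_congr rfl fun i _ => expand i]
      rw [Finset.sum_add_distrib, Finset.sum_add_distrib, Finset.sum_add_distrib]
      rw [Finset.sum_congr rfl fun i _ => cuu y i,
        Finset.sum_congr rfl fun i _ => cuw y i,
        Finset.sum_congr rfl fun i _ => cwu y i,
        Finset.sum_congr rfl fun i _ => cww y i,
        h1 y, h2 y, h3 y, h4 y]
      abel
    calc ∑ i, ⟪y, u i + w i⟫ ^ 2
        = ⟪y, ∑ i, ⟪y, u i + w i⟫ • (u i + w i)⟫ := by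
          rw [inner_sum]
          refine Finset.sum_congr rfl fun i _ => ?_
          rw [real_inner_smul_right]; ring
      _ = ‖y‖ ^ 2 := by rw [hsum, ← real_inner_self_eq_norm_sq]
end
end

section
/- Let {x_i}_{i=1}^m be a frame for ℝⁿ that is piecewise scalable with an orthogonal projection P and real constants {a_i, b_i}_{i=1}^m. Let Q be an orthogonal projection on ℝⁿ and let U be a unitary (linear isometric isomorphism) of ℝⁿ such that U∘P = Q∘U. Then {U x_i}_{i=1}^m is piecewise scalable with projection Q and the same constants: {a_i Q (U x_i) + b_i (I−Q)(U x_i)}_{i=1}^m is a Parseval frame for ℝⁿ. -/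
open scoped RealInnerProductSpace
open Finset

noncomputable section

theorem stmt6 {m n : ℕ} (x : Fin m → EuclideanSpace ℝ (Fin n))
    (hframe : Submodule.span ℝ (Set.range x) = ⊤)
    (P Q : EuclideanSpace ℝ (Fin n) →ₗ[ℝ] EuclideanSpace ℝ (Fin n))
    (hP : IsOrthProj P) (hQ : IsOrthProj Q)
    (a b : Fin m → ℝ)
    (hpar : IsParseval (fun i => a i • P (x i) + b i • (x i - P (x i))))
    (U : EuclideanSpace ℝ (Fin n) ≃ₗᵢ[ℝ] EuclideanSpace ℝ (Fin n))
    (hUPQU : ∀ v, U (P v) = Q (U v)) :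
    IsParseval (fun i => a i • Q (U (x i)) + b i • (U (x i) - Q (U (x i)))) := by
  intro y
  have key : ∀ i, a i • Q (U (x i)) + b i • (U (x i) - Q (U (x i)))
      = U (a i • P (x i) + b i • (x i - P (x i))) := by
    intro i
    simp [← hUPQU, map_add, map_smul, map_sub]
  calc ∑ i, ⟪y, a i • Q (U (x i)) + b i • (U (x i) - Q (U (x i)))⟫ ^ 2
      = ∑ i, ⟪U.symm y, a i • P (x i) + b i • (x i - P (x i))⟫ ^ 2 := by
        refine Finset.sum_congr rfl fun i _ => ?_
        rw [key i, ← U.inner_map_map (U.symm y), U.apply_symm_apply]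
    _ = ‖U.symm y‖ ^ 2 := hpar _
    _ = ‖y‖ ^ 2 := by rw [U.symm.norm_map]
end
end

section
/- Let {x_i}_{i=1}^m be a piecewise scalable frame for ℝⁿ (there exist an orthogonal projection P and real constants a_i, b_i such that {a_i P x_i + b_i (I−P) x_i}_{i=1}^m is a Parseval frame). Then for every unitary (linear isometric isomorphism) U of ℝⁿ, the frame {U x_i}_{i=1}^m is piecewise scalable. -/
open scoped RealInnerProductSpace
open Finset

noncomputable section

theorem stmt7 {m n : ℕ} (x : Fin m → EuclideanSpace ℝ (Fin n))
    (hframe : Submodule.span ℝ (Set.range x) = ⊤)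
    (hpw : ∃ P : EuclideanSpace ℝ (Fin n) →ₗ[ℝ] EuclideanSpace ℝ (Fin n),
      IsOrthProj P ∧ ∃ a b : Fin m → ℝ,
        IsParseval (fun i => a i • P (x i) + b i • (x i - P (x i))))
    (U : EuclideanSpace ℝ (Fin n) ≃ₗᵢ[ℝ] EuclideanSpace ℝ (Fin n)) :
    ∃ Q : EuclideanSpace ℝ (Fin n) →ₗ[ℝ] EuclideanSpace ℝ (Fin n),
      IsOrthProj Q ∧ ∃ a b : Fin m → ℝ,
        IsParseval (fun i => a i • Q (U (x i)) + b i • (U (x i) - Q (U (x i)))) := by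
  obtain ⟨P, ⟨hP2, hPsa⟩, a, b, hPar⟩ := hpw
  refine ⟨(U.toLinearEquiv.toLinearMap ∘ₗ P) ∘ₗ U.symm.toLinearEquiv.toLinearMap,
    ⟨?_, ?_⟩, a, b, ?_⟩
  · ext y
    have := LinearMap.congr_fun hP2 (U.symm y)
    simp only [LinearMap.comp_apply, LinearMap.coe_comp, Function.comp_apply,
      LinearEquiv.coe_coe, LinearIsometryEquiv.coe_toLinearEquiv] at *
    rw [LinearIsometryEquiv.symm_apply_apply, this]
  · intro y z
    simp only [LinearMap.coe_comp, Function.comp_apply, LinearEquiv.coe_coe,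
      LinearIsometryEquiv.coe_toLinearEquiv]
    calc ⟪U (P (U.symm y)), z⟫ = ⟪U (P (U.symm y)), U (U.symm z)⟫ := by
          rw [LinearIsometryEquiv.apply_symm_apply]
      _ = ⟪P (U.symm y), U.symm z⟫ := U.inner_map_map _ _
      _ = ⟪U.symm y, P (U.symm z)⟫ := hPsa _ _
      _ = ⟪U (U.symm y), U (P (U.symm z))⟫ := (U.inner_map_map _ _).symm
      _ = ⟪y, U (P (U.symm z))⟫ := by rw [LinearIsometryEquiv.apply_symm_apply]
  · intro y
    have key : ∀ i, a i • ((U.toLinearEquiv.toLinearMap ∘ₗ P) ∘ₗ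
          U.symm.toLinearEquiv.toLinearMap) (U (x i)) +
        b i • (U (x i) - ((U.toLinearEquiv.toLinearMap ∘ₗ P) ∘ₗ
          U.symm.toLinearEquiv.toLinearMap) (U (x i))) =
        U (a i • P (x i) + b i • (x i - P (x i))) := by
      intro i
      simp only [LinearMap.coe_comp, Function.comp_apply, LinearEquiv.coe_coe,
        LinearIsometryEquiv.coe_toLinearEquiv, LinearIsometryEquiv.symm_apply_apply,
        map_add, map_smul, map_sub]
    simp only [key]
    calc ∑ i, ⟪y, U (a i • P (x i) + b i • (x i - P (x i)))⟫ ^ 2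
        = ∑ i, ⟪U.symm y, a i • P (x i) + b i • (x i - P (x i))⟫ ^ 2 := by
          refine Finset.sum_congr rfl fun i _ => ?_
          rw [← U.inner_map_map (U.symm y), LinearIsometryEquiv.apply_symm_apply]
      _ = ‖U.symm y‖ ^ 2 := hPar (U.symm y)
      _ = ‖y‖ ^ 2 := by rw [U.symm.norm_map]
end
end

section
/- Let {x_i}_{i=1}^m be a frame for ℝⁿ that is piecewise scalable with an orthogonal projection P of rank k. Then for every orthogonal projection Q on ℝⁿ of rank k, there exists a unitary (linear isometric isomorphism) U of ℝⁿ such that {U x_i}_{i=1}^m is piecewise scalable with projection Q: there exist real constants a_1,...,a_m, b_1,...,b_m such that {a_i Q (U x_i) + b_i (I−Q)(U x_i)}_{i=1}^m is a Parseval frame for ℝⁿ. -/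
open scoped RealInnerProductSpace
open Finset

noncomputable section

set_option maxHeartbeats 1000000 in
theorem stmt8 {m n k : ℕ} (x : Fin m → EuclideanSpace ℝ (Fin n))
    (hframe : Submodule.span ℝ (Set.range x) = ⊤)
    (P : EuclideanSpace ℝ (Fin n) →ₗ[ℝ] EuclideanSpace ℝ (Fin n))
    (hP : IsOrthProj P) (hPrank : Module.finrank ℝ (LinearMap.range P) = k)
    (hpw : ∃ a b : Fin m → ℝ,
      IsParseval (fun i => a i • P (x i) + b i • (x i - P (x i))))
    (Q : EuclideanSpace ℝ (Fin n) →ₗ[ℝ] EuclideanSpace ℝ (Fin n))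
    (hQ : IsOrthProj Q) (hQrank : Module.finrank ℝ (LinearMap.range Q) = k) :
    ∃ U : EuclideanSpace ℝ (Fin n) ≃ₗᵢ[ℝ] EuclideanSpace ℝ (Fin n),
      ∃ a b : Fin m → ℝ,
        IsParseval (fun i => a i • Q (U (x i)) + b i • (U (x i) - Q (U (x i)))) := by
  obtain ⟨a, b, hab⟩ := hpw
  set V : Submodule ℝ (EuclideanSpace ℝ (Fin n)) := LinearMap.range P with hV
  set W : Submodule ℝ (EuclideanSpace ℝ (Fin n)) := LinearMap.range Q with hW
  obtain ⟨hPidem, hPsa⟩ := hP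
  obtain ⟨hQidem, hQsa⟩ := hQ
  have hPP : ∀ y : (EuclideanSpace ℝ (Fin n)), P (P y) = P y := fun y => congrFun (congrArg DFunLike.coe hPidem) y
  have hQQ : ∀ y : (EuclideanSpace ℝ (Fin n)), Q (Q y) = Q y := fun y => congrFun (congrArg DFunLike.coe hQidem) y
  -- membership facts
  have hPc : ∀ y : (EuclideanSpace ℝ (Fin n)), y - P y ∈ Vᗮ := by
    intro y v hv
    obtain ⟨w, rfl⟩ := hv
    rw [hPsa, map_sub, hPP, sub_self, inner_zero_right]
  have hQfix : ∀ w ∈ W, Q w = w := by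
    rintro _ ⟨y, rfl⟩; exact hQQ y
  have hQker : ∀ w ∈ Wᗮ, Q w = 0 := by
    intro w hw
    have : ∀ z : (EuclideanSpace ℝ (Fin n)), ⟪Q w, z⟫ = 0 := fun z => by
      rw [hQsa, real_inner_comm]; exact hw (Q z) ⟨z, rfl⟩
    simpa using inner_self_eq_zero.mp (this (Q w))
  -- dimension facts
  have hVW : Module.finrank ℝ W = Module.finrank ℝ V := by rw [hPrank, hQrank]
  have hVWo : Module.finrank ℝ Wᗮ = Module.finrank ℝ Vᗮ := by
    have h1 := V.finrank_add_finrank_orthogonal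
    have h2 := W.finrank_add_finrank_orthogonal
    omega
  -- isometries between the pieces
  let f : V ≃ₗᵢ[ℝ] W :=
    (stdOrthonormalBasis ℝ V).repr.trans
      (((stdOrthonormalBasis ℝ W).reindex (finCongr hVW)).repr.symm)
  let g : Vᗮ ≃ₗᵢ[ℝ] Wᗮ :=
    (stdOrthonormalBasis ℝ Vᗮ).repr.trans
      (((stdOrthonormalBasis ℝ Wᗮ).reindex (finCongr hVWo)).repr.symm)
  let PV : (EuclideanSpace ℝ (Fin n)) →ₗ[ℝ] V := P.codRestrict V (fun y => ⟨y, rfl⟩)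
  let PC : (EuclideanSpace ℝ (Fin n)) →ₗ[ℝ] Vᗮ := (LinearMap.id - P).codRestrict Vᗮ (fun y => hPc y)
  let U₀ : (EuclideanSpace ℝ (Fin n)) →ₗ[ℝ] (EuclideanSpace ℝ (Fin n)) :=
    W.subtype ∘ₗ f.toLinearMap ∘ₗ PV + Wᗮ.subtype ∘ₗ g.toLinearMap ∘ₗ PC
  have hU₀ : ∀ y : (EuclideanSpace ℝ (Fin n)), U₀ y = (f (PV y) : (EuclideanSpace ℝ (Fin n))) + (g (PC y) : (EuclideanSpace ℝ (Fin n))) := fun y => rfl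
  have hPVC : ∀ y : (EuclideanSpace ℝ (Fin n)), (PV y : (EuclideanSpace ℝ (Fin n))) = P y ∧ (PC y : (EuclideanSpace ℝ (Fin n))) = y - P y := fun y => ⟨rfl, rfl⟩
  have hinner : ∀ y z : (EuclideanSpace ℝ (Fin n)), ⟪U₀ y, U₀ z⟫ = ⟪y, z⟫ := by
    intro y z
    have ort1 : ⟪(f (PV y) : (EuclideanSpace ℝ (Fin n))), (g (PC z) : (EuclideanSpace ℝ (Fin n)))⟫ = 0 :=
      (g (PC z)).2 (f (PV y) : (EuclideanSpace ℝ (Fin n))) (f (PV y)).2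
    have ort2 : ⟪(g (PC y) : (EuclideanSpace ℝ (Fin n))), (f (PV z) : (EuclideanSpace ℝ (Fin n)))⟫ = by exact (0 : ℝ) := by
      rw [real_inner_comm]; exact (g (PC y)).2 (f (PV z) : (EuclideanSpace ℝ (Fin n))) (f (PV z)).2
    have hf : ⟪(f (PV y) : (EuclideanSpace ℝ (Fin n))), (f (PV z) : (EuclideanSpace ℝ (Fin n)))⟫ = ⟪P y, P z⟫ := by
      rw [← Submodule.coe_inner, f.inner_map_map, Submodule.coe_inner]; rfl
    have hg : ⟪(g (PC y) : (EuclideanSpace ℝ (Fin n))), (g (PC z) : (EuclideanSpace ℝ (Fin n)))⟫ = ⟪y - P y, z - P z⟫ := by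
      rw [← Submodule.coe_inner, g.inner_map_map, Submodule.coe_inner]; rfl
    have key : ⟪P y, P z⟫ + ⟪y - P y, z - P z⟫ = ⟪y, z⟫ := by
      have h1 : ⟪P y, z - P z⟫ = 0 := hPc z (P y) ⟨y, rfl⟩
      have h2 : ⟪y - P y, P z⟫ = 0 := by
        rw [real_inner_comm]; exact hPc y (P z) ⟨z, rfl⟩
      have e1 : P y + (y - P y) = y := by abel
      have e2 : P z + (z - P z) = z := by abel
      have h3 : ⟪P y + (y - P y), P z + (z - P z)⟫ = ⟪y, z⟫ := by rw [e1, e2]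
      rw [inner_add_left, inner_add_right, inner_add_right] at h3
      linarith
    rw [hU₀, hU₀, inner_add_left, inner_add_right, inner_add_right, ort1, ort2, hf, hg]
    linarith
  have hinj : Function.Injective U₀ := by
    intro u v h
    have h0 : ⟪u - v, u - v⟫ = (0 : ℝ) := by
      rw [← hinner, map_sub, h, sub_self, inner_zero_left]
    exact sub_eq_zero.mp (inner_self_eq_zero.mp h0)
  let Ue : (EuclideanSpace ℝ (Fin n)) ≃ₗ[ℝ] (EuclideanSpace ℝ (Fin n)) := LinearEquiv.ofInjectiveEndo U₀ hinj
  have hUe : ∀ y : (EuclideanSpace ℝ (Fin n)), Ue y = U₀ y := fun y => rfl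
  let U : (EuclideanSpace ℝ (Fin n)) ≃ₗᵢ[ℝ] (EuclideanSpace ℝ (Fin n)) := Ue.isometryOfInner (fun u v => by rw [hUe, hUe]; exact hinner u v)
  have hUcoe : ∀ y : (EuclideanSpace ℝ (Fin n)), U y = U₀ y := fun y => rfl
  -- intertwining
  have hQU : ∀ y : (EuclideanSpace ℝ (Fin n)), Q (U y) = U (P y) := by
    intro y
    have h1 : Q (U y) = (f (PV y) : (EuclideanSpace ℝ (Fin n))) := by
      rw [hUcoe, hU₀, map_add, hQfix _ (f (PV y)).2, hQker _ (g (PC y)).2, add_zero]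
    have hPVP : PV (P y) = PV y := Subtype.ext (by exact hPP y)
    have hPCP : PC (P y) = 0 := Subtype.ext (by show P y - P (P y) = (0 : (EuclideanSpace ℝ (Fin n))); rw [hPP, sub_self])
    rw [h1, hUcoe, hU₀, hPVP, hPCP, map_zero]
    simp
  refine ⟨U, a, b, ?_⟩
  intro z
  have eqs : ∀ i, a i • Q (U (x i)) + b i • (U (x i) - Q (U (x i)))
      = U (a i • P (x i) + b i • (x i - P (x i))) := by
    intro i
    rw [hQU]
    rw [map_add, map_smul, map_smul, map_sub]
  show ∑ i, ⟪z, a i • Q (U (x i)) + b i • (U (x i) - Q (U (x i)))⟫ ^ 2 = ‖z‖ ^ 2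
  calc ∑ i, ⟪z, a i • Q (U (x i)) + b i • (U (x i) - Q (U (x i)))⟫ ^ 2
      = ∑ i, ⟪U.symm z, a i • P (x i) + b i • (x i - P (x i))⟫ ^ 2 := by
        refine Finset.sum_congr rfl fun i _ => ?_
        rw [eqs i, ← U.inner_map_map (U.symm z), U.apply_symm_apply]
    _ = ‖U.symm z‖ ^ 2 := hab (U.symm z)
    _ = ‖z‖ ^ 2 := by rw [U.symm.norm_map]
end
end

section
/- Let {x_i}_{i=1}^m be a frame for ℝⁿ. Then {x_i}_{i=1}^m is piecewise scalable if and only if there exist k ≤ n and a unitary (linear isometric isomorphism) U of ℝⁿ such that {U x_i}_{i=1}^m is piecewise scalable with the canonical projection Π_{[k]}, where Π_{[k]} is the orthogonal projection of ℝⁿ onto the span of the first k standard basis vectors e_1, ..., e_k. -/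
/-!
An orthogonal projection `P` is determined by its range `V`. Listing an orthonormal basis of
`V` first and one of `Vᗮ` after it gives an orthonormal basis of `ℝⁿ` whose coordinate map `U`
is a unitary with `Π_[k] ∘ U = U ∘ P`, `k = dim V`; hence `U` carries the family
`a i • P xᵢ + b i • (I - P) xᵢ` onto `a i • Π_[k] (U xᵢ) + b i • (I - Π_[k]) (U xᵢ)`, and unitaries
preserve Parseval frames. Conversely `U⁻¹ ∘ Π_[k] ∘ U` is an orthogonal projection.
-/

open scoped RealInnerProductSpace
open Finset

noncomputable section

/-- The canonical projection `Π_[k]` of `ℝⁿ` onto the span of the first `k`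
standard basis vectors: `x = (x(1),...,x(n)) ↦ (x(1),...,x(k),0,...,0)`. -/
def canonProj (n k : ℕ) : EuclideanSpace ℝ (Fin n) →ₗ[ℝ] EuclideanSpace ℝ (Fin n) where
  toFun x := WithLp.toLp 2 (fun j : Fin n => if (j : ℕ) < k then x j else 0)
  map_add' x y := by
    ext j
    by_cases h : (j : ℕ) < k <;> simp [h, PiLp.add_apply]
  map_smul' c x := by
    ext j
    by_cases h : (j : ℕ) < k <;> simp [h, PiLp.smul_apply]

lemma Submodule.exists_orthonormalBasis_fin_adapted {E : Type*} [NormedAddCommGroup E]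
    [InnerProductSpace ℝ E] [FiniteDimensional ℝ E] {n : ℕ} (hn : Module.finrank ℝ E = n)
    (K : Submodule ℝ E) :
    ∃ b : OrthonormalBasis (Fin n) ℝ E, ∀ j : Fin n,
      ((j : ℕ) < Module.finrank ℝ K → b j ∈ K) ∧ (Module.finrank ℝ K ≤ j → b j ∈ Kᗮ) := by
  let e : Fin (Module.finrank ℝ K) ⊕ Fin (Module.finrank ℝ Kᗮ) ≃ Fin n :=
    finSumFinEquiv.trans (finCongr (by rw [K.finrank_add_finrank_orthogonal, hn]))
  refine ⟨(((stdOrthonormalBasis ℝ K).prod (stdOrthonormalBasis ℝ Kᗮ)).map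
    K.orthogonalDecomposition.symm).reindex e, fun j => ?_⟩
  obtain ⟨i | i, rfl⟩ := e.surjective j <;> simp [e]

section

variable {n : ℕ}

lemma canonProj_apply {k : ℕ} (x : EuclideanSpace ℝ (Fin n)) (j : Fin n) :
    canonProj n k x j = if (j : ℕ) < k then x j else 0 := rfl

lemma isOrthProj_canonProj (k : ℕ) : IsOrthProj (canonProj n k) := by
  refine ⟨?_, fun x y => ?_⟩
  · ext x j
    by_cases h : (j : ℕ) < k <;> simp [canonProj_apply, h]
  · simp only [PiLp.inner_apply, RCLike.inner_apply, canonProj_apply]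
    refine Finset.sum_congr rfl fun j _ => ?_
    by_cases h : (j : ℕ) < k <;> simp [h]

lemma IsParseval.map {ι : Type} [Fintype ι] {v : ι → EuclideanSpace ℝ (Fin n)}
    (hv : IsParseval v) (U : EuclideanSpace ℝ (Fin n) ≃ₗᵢ[ℝ] EuclideanSpace ℝ (Fin n)) :
    IsParseval (fun i => U (v i)) := by
  intro y
  simpa [LinearIsometryEquiv.inner_map_eq_flip] using hv (U.symm y)

namespace IsOrthProj

variable {P : EuclideanSpace ℝ (Fin n) →ₗ[ℝ] EuclideanSpace ℝ (Fin n)}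

lemma conj (hP : IsOrthProj P)
    (U : EuclideanSpace ℝ (Fin n) ≃ₗᵢ[ℝ] EuclideanSpace ℝ (Fin n)) :
    IsOrthProj (U.toLinearMap ∘ₗ P ∘ₗ U.symm.toLinearMap) := by
  refine ⟨LinearMap.ext fun x => ?_,
    (LinearMap.isSymmetric_linearIsometryEquiv_conj_iff P U).2 hP.2⟩
  simpa using LinearMap.congr_fun hP.1 (U.symm x)

lemma apply_of_mem_range (hP : IsOrthProj P) {v : EuclideanSpace ℝ (Fin n)}
    (hv : v ∈ LinearMap.range P) : P v = v := by
  obtain ⟨u, rfl⟩ := hv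
  exact LinearMap.congr_fun hP.1 u

lemma apply_of_mem_orthogonal (hP : IsOrthProj P) {v : EuclideanSpace ℝ (Fin n)}
    (hv : v ∈ (LinearMap.range P)ᗮ) : P v = 0 := by
  rw [← inner_self_eq_zero (𝕜 := ℝ), hP.2]
  exact Submodule.inner_left_of_mem_orthogonal (LinearMap.mem_range_self P _) hv

lemma exists_canonProj_comp_eq (hP : IsOrthProj P) :
    ∃ k ≤ n, ∃ U : EuclideanSpace ℝ (Fin n) ≃ₗᵢ[ℝ] EuclideanSpace ℝ (Fin n),
      ∀ y, canonProj n k (U y) = U (P y) := by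
  obtain ⟨b, hb⟩ := (LinearMap.range P).exists_orthonormalBasis_fin_adapted
    finrank_euclideanSpace_fin
  refine ⟨_, (LinearMap.range P).finrank_le.trans_eq finrank_euclideanSpace_fin, b.repr,
    fun y => ?_⟩
  ext j
  rw [canonProj_apply, b.repr_apply_apply, b.repr_apply_apply, ← hP.2]
  split_ifs with hj
  · rw [hP.apply_of_mem_range ((hb j).1 hj)]
  · rw [hP.apply_of_mem_orthogonal ((hb j).2 (not_lt.mp hj)), inner_zero_left]

end IsOrthProj

def piecewiseScaling {ι : Type} (P : EuclideanSpace ℝ (Fin n) →ₗ[ℝ] EuclideanSpace ℝ (Fin n))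
    (a b : ι → ℝ) (x : ι → EuclideanSpace ℝ (Fin n)) : ι → EuclideanSpace ℝ (Fin n) :=
  fun i => a i • P (x i) + b i • (x i - P (x i))

lemma isParseval_piecewiseScaling_map_iff {ι : Type} [Fintype ι]
    {P Q : EuclideanSpace ℝ (Fin n) →ₗ[ℝ] EuclideanSpace ℝ (Fin n)}
    (U : EuclideanSpace ℝ (Fin n) ≃ₗᵢ[ℝ] EuclideanSpace ℝ (Fin n))
    (hPQ : ∀ y, Q (U y) = U (P y)) (a b : ι → ℝ) (x : ι → EuclideanSpace ℝ (Fin n)) :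
    IsParseval (piecewiseScaling Q a b (fun i => U (x i))) ↔
      IsParseval (piecewiseScaling P a b x) := by
  have hmap : piecewiseScaling Q a b (fun i => U (x i)) =
      fun i => U (piecewiseScaling P a b x i) := by
    funext i
    simp [piecewiseScaling, hPQ]
  rw [hmap]
  exact ⟨fun h => by simpa using h.map U.symm, fun h => h.map U⟩

end

theorem stmt9_general {m n : ℕ} (x : Fin m → EuclideanSpace ℝ (Fin n)) :
    (∃ P : EuclideanSpace ℝ (Fin n) →ₗ[ℝ] EuclideanSpace ℝ (Fin n),
      IsOrthProj P ∧ ∃ a b : Fin m → ℝ,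
        IsParseval (fun i => a i • P (x i) + b i • (x i - P (x i)))) ↔
    (∃ k ≤ n, ∃ U : EuclideanSpace ℝ (Fin n) ≃ₗᵢ[ℝ] EuclideanSpace ℝ (Fin n),
      ∃ a b : Fin m → ℝ,
        IsParseval (fun i =>
          a i • canonProj n k (U (x i)) +
            b i • (U (x i) - canonProj n k (U (x i))))) := by
  constructor
  · rintro ⟨P, hP, a, b, hParseval⟩
    obtain ⟨k, hk, U, hU⟩ := hP.exists_canonProj_comp_eq
    exact ⟨k, hk, U, a, b, (isParseval_piecewiseScaling_map_iff U hU a b x).2 hParseval⟩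
  · rintro ⟨k, -, U, a, b, hParseval⟩
    refine ⟨_, (isOrthProj_canonProj k).conj U.symm, a, b, ?_⟩
    exact (isParseval_piecewiseScaling_map_iff U (by simp) a b x).1 hParseval

theorem stmt9 {m n : ℕ} (x : Fin m → EuclideanSpace ℝ (Fin n))
    (hframe : Submodule.span ℝ (Set.range x) = ⊤) :
    (∃ P : EuclideanSpace ℝ (Fin n) →ₗ[ℝ] EuclideanSpace ℝ (Fin n),
      IsOrthProj P ∧ ∃ a b : Fin m → ℝ,
        IsParseval (fun i => a i • P (x i) + b i • (x i - P (x i)))) ↔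
    (∃ k ≤ n, ∃ U : EuclideanSpace ℝ (Fin n) ≃ₗᵢ[ℝ] EuclideanSpace ℝ (Fin n),
      ∃ a b : Fin m → ℝ,
        IsParseval (fun i =>
          a i • canonProj n k (U (x i)) +
            b i • (U (x i) - canonProj n k (U (x i))))) :=
  stmt9_general x
end
end

section
/- Every frame for ℝ³ is piecewise scalable: for every finite family {x_i}_{i=1}^m spanning ℝ³ there exist an orthogonal projection P on ℝ³ and real constants a_1,...,a_m, b_1,...,b_m such that {a_i P x_i + b_i (I−P) x_i}_{i=1}^m is a Parseval frame for ℝ³. -/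
open scoped RealInnerProductSpace
open Finset

noncomputable section

/-!
Pick three linearly independent frame vectors `v₀, v₁, v₂` and let `P` project onto a line `ℝ w`.
If the components of `v₀, v₁` orthogonal to `w` are nonzero and orthogonal to each other, and
`⟪w, v₂⟫ ≠ 0`, then normalizing these two components and `P v₂` gives an orthonormal basis;
all other frame vectors get the coefficients `0`.

For unit vectors `u₀, u₁` with `c = ⟪u₀, u₁⟫ ∈ [0, 1)` (replace `v₁` by `-v₁` if needed), the
components orthogonal to a unit vector `w` have inner product `c - ⟪w, u₀⟫ ⟪w, u₁⟫`, so it suffices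
that `⟪w, u₀⟫ = ⟪w, u₁⟫ = √c`. With `n` a unit normal to `u₀, u₁`, the vectors
`√c / (1 + c) • (u₀ + u₁) ± √((1 - c) / (1 + c)) • n` do this, and one of the two signs gives
`⟪w, v₂⟫ ≠ 0`.
-/

theorem exists_linearIndependent_comp_fin {K V ι : Type*} [DivisionRing K] [AddCommGroup V]
    [Module K V] [Module.Finite K V] {n : ℕ} (hn : Module.finrank K V = n) {x : ι → V}
    (hx : Submodule.span K (Set.range x) = ⊤) :
    ∃ g : Fin n → ι, LinearIndependent K (x ∘ g) := by
  obtain ⟨κ, a, -, hspan, hli⟩ := exists_linearIndependent' K x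
  let e := (Module.Basis.mk hli (by rw [hspan, hx])).indexEquiv (Module.finBasisOfFinrankEq K V hn)
  exact ⟨a ∘ e.symm, hli.comp e.symm e.symm.injective⟩

theorem isOrthProj_starProjection {n : ℕ} (K : Submodule ℝ (EuclideanSpace ℝ (Fin n))) :
    IsOrthProj (K.starProjection : EuclideanSpace ℝ (Fin n) →ₗ[ℝ] EuclideanSpace ℝ (Fin n)) :=
  ⟨congrArg ContinuousLinearMap.toLinearMap K.isIdempotentElem_starProjection,
    K.inner_starProjection_left_eq_right⟩

theorem isParseval_of_orthonormal {n : ℕ} {ι : Type} [Fintype ι]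
    {e : ι → EuclideanSpace ℝ (Fin n)} (he : Orthonormal ℝ e) (hcard : Fintype.card ι = n) :
    IsParseval e := fun y => by
  have hspan := he.linearIndependent.span_eq_top_of_card_eq_finrank' (by simpa using hcard)
  simpa using (OrthonormalBasis.mk he hspan.ge).sum_sq_inner_left y

theorem IsParseval.of_comp_injective {n : ℕ} {ι κ : Type} [Fintype ι] [Fintype κ]
    {v : ι → EuclideanSpace ℝ (Fin n)} {g : κ → ι} (hg : Function.Injective g)
    (h : IsParseval (v ∘ g)) (hv : ∀ i ∉ Set.range g, v i = 0) : IsParseval v := fun y => by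
  rw [← h y]
  exact (Fintype.sum_of_injective g hg _ _ (fun i hi => by simp [hv i hi]) fun _ => rfl).symm

section PiecewiseOrthogonal

variable {E : Type*} [NormedAddCommGroup E] [InnerProductSpace ℝ E]

def IsPiecewiseOrthogonal (K : Submodule ℝ E) [K.HasOrthogonalProjection] (v : Fin 3 → E) :
    Prop :=
  ⟪v 0 - K.starProjection (v 0), v 1 - K.starProjection (v 1)⟫ = 0 ∧
    v 0 - K.starProjection (v 0) ≠ 0 ∧ v 1 - K.starProjection (v 1) ≠ 0 ∧
    K.starProjection (v 2) ≠ 0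

variable {K : Submodule ℝ E} [K.HasOrthogonalProjection]

theorem isPiecewiseOrthogonal_smul_iff {v : Fin 3 → E} {s : Fin 3 → ℝ} (hs : ∀ k, s k ≠ 0) :
    IsPiecewiseOrthogonal K (s • v) ↔ IsPiecewiseOrthogonal K v := by
  simp only [IsPiecewiseOrthogonal, Pi.smul_apply', map_smul, ← smul_sub, inner_smul_left,
    inner_smul_right, smul_ne_zero_iff, ne_eq, hs, not_false_eq_true, true_and, mul_eq_zero,
    false_or, RCLike.conj_to_real]

theorem IsPiecewiseOrthogonal.exists_orthonormal {v : Fin 3 → E}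
    (h : IsPiecewiseOrthogonal K v) :
    ∃ a b : Fin 3 → ℝ, Orthonormal ℝ fun k =>
      a k • K.starProjection (v k) + b k • (v k - K.starProjection (v k)) := by
  obtain ⟨h01, h0, h1, h2⟩ := h
  have hperp : ∀ x y, ⟪K.starProjection x, y - K.starProjection y⟫ = 0 := fun x y =>
    K.inner_right_of_mem_orthogonal (K.starProjection_apply_mem x)
      (K.sub_starProjection_mem_orthogonal y)
  have hunit : ∀ x : E, x ≠ 0 → ‖‖x‖⁻¹ • x‖ = 1 := fun x hx => by
    rw [norm_smul, norm_inv, norm_norm, inv_mul_cancel₀ (norm_ne_zero_iff.mpr hx)]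
  refine ⟨![0, 0, ‖K.starProjection (v 2)‖⁻¹],
    ![‖v 0 - K.starProjection (v 0)‖⁻¹, ‖v 1 - K.starProjection (v 1)‖⁻¹, 0], ?_⟩
  rw [orthonormal_iff_ite]
  intro i j
  fin_cases i <;> fin_cases j <;>
    simp [inner_smul_left, inner_smul_right, h01, hperp, real_inner_comm (v 0 - _),
      hunit _ h0, hunit _ h1, hunit _ h2]

theorem exists_unit_inner_eq_sqrt {u₀ u₁ n z : E} (hu₀ : ‖u₀‖ = 1) (hu₁ : ‖u₁‖ = 1)
    (hc₀ : 0 ≤ ⟪u₀, u₁⟫) (hc₁ : ⟪u₀, u₁⟫ < 1) (hn : ‖n‖ = 1) (hn₀ : ⟪n, u₀⟫ = 0)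
    (hn₁ : ⟪n, u₁⟫ = 0) (hnz : ⟪n, z⟫ ≠ 0) :
    ∃ w : E, ‖w‖ = 1 ∧ ⟪w, u₀⟫ = √⟪u₀, u₁⟫ ∧ ⟪w, u₁⟫ = √⟪u₀, u₁⟫ ∧ ⟪w, z⟫ ≠ 0 := by
  set c := ⟪u₀, u₁⟫
  set s := √c / (1 + c) with hs_def
  set t := √((1 - c) / (1 + c))
  have hc : 0 < 1 + c := by linarith
  have hsc : s * (1 + c) = √c := div_mul_cancel₀ _ hc.ne'
  have ht : t ^ 2 = (1 - c) / (1 + c) := Real.sq_sqrt (div_nonneg (by linarith) hc.le)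
  have ht₀ : t ≠ 0 := (Real.sqrt_pos.mpr (div_pos (by linarith) hc)).ne'
  have h₁₀ : ⟪u₁, u₀⟫ = c := real_inner_comm u₀ u₁
  have hn₀' : ⟪u₀, n⟫ = 0 := by rw [real_inner_comm, hn₀]
  have hn₁' : ⟪u₁, n⟫ = 0 := by rw [real_inner_comm, hn₁]
  have hst : 2 * s * √c + t ^ 2 = 1 := by
    rw [ht, hs_def]
    field_simp
    rw [Real.sq_sqrt hc₀]
    ring
  have hw : ∀ τ : ℝ, τ ^ 2 = t ^ 2 → ‖s • (u₀ + u₁) + τ • n‖ = 1 ∧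
      ⟪s • (u₀ + u₁) + τ • n, u₀⟫ = √c ∧ ⟪s • (u₀ + u₁) + τ • n, u₁⟫ = √c := by
    intro τ hτ
    rw [norm_eq_sqrt_real_inner, Real.sqrt_eq_one]
    simp only [inner_add_left, inner_add_right, real_inner_smul_left, real_inner_smul_right,
      inner_self_eq_one_of_norm_eq_one hu₀, inner_self_eq_one_of_norm_eq_one hu₁,
      inner_self_eq_one_of_norm_eq_one hn, h₁₀, hn₀, hn₁, hn₀', hn₁']
    refine ⟨?_, by linear_combination hsc, by linear_combination hsc⟩
    linear_combination 2 * s * hsc + hτ + hst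
  obtain ⟨τ, hτ, hτz⟩ : ∃ τ : ℝ, τ ^ 2 = t ^ 2 ∧ ⟪s • (u₀ + u₁) + τ • n, z⟫ ≠ 0 := by
    by_contra! h
    have hpos := h t rfl
    have hneg := h (-t) (neg_sq t)
    simp only [inner_add_left, real_inner_smul_left] at hpos hneg
    exact mul_ne_zero ht₀ hnz (by linarith)
  obtain ⟨hw₁, hw₀, hw₁'⟩ := hw τ hτ
  exact ⟨_, hw₁, hw₀, hw₁', hτz⟩

theorem isPiecewiseOrthogonal_span_singleton {w : E} {u : Fin 3 → E} (hw : ‖w‖ = 1)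
    (hu₀ : ‖u 0‖ = 1) (hu₁ : ‖u 1‖ = 1) (hc₀ : 0 ≤ ⟪u 0, u 1⟫) (hc₁ : ⟪u 0, u 1⟫ < 1)
    (hw₀ : ⟪w, u 0⟫ = √⟪u 0, u 1⟫) (hw₁ : ⟪w, u 1⟫ = √⟪u 0, u 1⟫) (hw₂ : ⟪w, u 2⟫ ≠ 0) :
    IsPiecewiseOrthogonal (ℝ ∙ w) u := by
  have hs : √⟪u 0, u 1⟫ * √⟪u 0, u 1⟫ = ⟪u 0, u 1⟫ := Real.mul_self_sqrt hc₀
  simp only [IsPiecewiseOrthogonal, Submodule.starProjection_unit_singleton ℝ hw, hw₀, hw₁]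
  refine ⟨?_, fun h => ?_, fun h => ?_, smul_ne_zero hw₂ (norm_ne_zero_iff.mp (by simp [hw]))⟩
  · simp only [inner_sub_left, inner_sub_right, real_inner_smul_left, real_inner_smul_right,
      real_inner_comm w (u 0), hw₀, hw₁, inner_self_eq_one_of_norm_eq_one hw]
    linear_combination -hs
  · have := congrArg (⟪·, u 0⟫) h
    simp only [inner_sub_left, real_inner_smul_left, hw₀, inner_self_eq_one_of_norm_eq_one hu₀,
      inner_zero_left] at this
    linarith
  · have := congrArg (⟪·, u 1⟫) h
    simp only [inner_sub_left, real_inner_smul_left, hw₁, inner_self_eq_one_of_norm_eq_one hu₁,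
      inner_zero_left] at this
    linarith

theorem exists_unit_inner_eq_zero_inner_ne_zero (hE : Module.finrank ℝ E = 3) {v : Fin 3 → E}
    (hv : LinearIndependent ℝ v) :
    ∃ n : E, ‖n‖ = 1 ∧ ⟪n, v 0⟫ = 0 ∧ ⟪n, v 1⟫ = 0 ∧ ⟪n, v 2⟫ ≠ 0 := by
  let b := basisOfLinearIndependentOfCardEqFinrank hv (by simp [hE])
  have : FiniteDimensional ℝ E := b.finiteDimensional_of_finite
  set K := Submodule.span ℝ (Set.range ![v 0, v 1])
  have hK : K ≠ ⊤ := fun h => by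
    have : Module.finrank ℝ K ≤ 2 := finrank_range_le_card (R := ℝ) ![v 0, v 1]
    rw [h, finrank_top, hE] at this
    simp at this
  obtain ⟨n, hnK, hn⟩ :=
    Submodule.exists_mem_ne_zero_of_ne_bot (mt Submodule.orthogonal_eq_bot_iff.mp hK)
  have hn₀ : ⟪n, v 0⟫ = 0 := K.inner_left_of_mem_orthogonal (Submodule.subset_span ⟨0, rfl⟩) hnK
  have hn₁ : ⟪n, v 1⟫ = 0 := K.inner_left_of_mem_orthogonal (Submodule.subset_span ⟨1, rfl⟩) hnK
  have hn₂ : ⟪n, v 2⟫ ≠ 0 := fun hn₂ => hn <| InnerProductSpace.ext_inner_left_basis b fun i => by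
    fin_cases i <;> simp [b, real_inner_comm n, hn₀, hn₁, hn₂]
  refine ⟨‖n‖⁻¹ • n, ?_, ?_, ?_, ?_⟩ <;>
    simp [norm_smul, real_inner_smul_left, hn₀, hn₁, hn₂, hn]

theorem exists_isPiecewiseOrthogonal_span_singleton (hE : Module.finrank ℝ E = 3)
    {v : Fin 3 → E} (hv : LinearIndependent ℝ v) :
    ∃ w : E, IsPiecewiseOrthogonal (ℝ ∙ w) v := by
  obtain ⟨n, hn, hn₀, hn₁, hn₂⟩ := exists_unit_inner_eq_zero_inner_ne_zero hE hv
  obtain ⟨σ, hσ, hσc⟩ : ∃ σ : ℝ, |σ| = 1 ∧ 0 ≤ σ * ⟪v 0, v 1⟫ := by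
    rcases le_total 0 ⟪v 0, v 1⟫ with h | h
    exacts [⟨1, by simp, by simpa⟩, ⟨-1, by simp, by simpa⟩]
  set s : Fin 3 → ℝ := ![‖v 0‖⁻¹, σ * ‖v 1‖⁻¹, 1]
  have hs : ∀ k, s k ≠ 0 := by
    intro k
    fin_cases k <;> simp [s, hv.ne_zero, ← abs_ne_zero (a := σ), hσ]
  set u := s • v
  have hu₀ : ‖u 0‖ = 1 := by simp [u, s, norm_smul, hv.ne_zero]
  have hu₁ : ‖u 1‖ = 1 := by simp [u, s, norm_smul, hσ, hv.ne_zero]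
  have hc₀ : 0 ≤ ⟪u 0, u 1⟫ := by
    have : ⟪u 0, u 1⟫ = (‖v 0‖⁻¹ * ‖v 1‖⁻¹) * (σ * ⟪v 0, v 1⟫) := by
      simp only [u, s, Pi.smul_apply', real_inner_smul_left, real_inner_smul_right,
        Matrix.cons_val_zero, Matrix.cons_val_one]
      ring
    rw [this]
    positivity
  have hc₁ : ⟪u 0, u 1⟫ < 1 := by
    refine (inner_lt_one_iff_real_of_norm_eq_one hu₀ hu₁).mpr fun h => hs 0 ?_
    have := Fintype.linearIndependent_iff.mp hv ![s 0, -s 1, 0]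
      (by
        simp only [Fin.sum_univ_three, Matrix.cons_val_zero, Matrix.cons_val_one, Matrix.cons_val,
          neg_smul, zero_smul, add_zero, ← sub_eq_add_neg, sub_eq_zero]
        exact h) 0
    simpa using this
  obtain ⟨w, hw, hw₀, hw₁, hw₂⟩ := exists_unit_inner_eq_sqrt hu₀ hu₁ hc₀ hc₁ hn
    (by simp [u, real_inner_smul_right, hn₀]) (by simp [u, real_inner_smul_right, hn₁])
    (show ⟪n, u 2⟫ ≠ 0 by simpa [u, s] using hn₂)
  exact ⟨w, (isPiecewiseOrthogonal_smul_iff hs).mp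
    (isPiecewiseOrthogonal_span_singleton hw hu₀ hu₁ hc₀ hc₁ hw₀ hw₁ hw₂)⟩

end PiecewiseOrthogonal

theorem stmt10 {m : ℕ} (x : Fin m → EuclideanSpace ℝ (Fin 3))
    (hframe : Submodule.span ℝ (Set.range x) = ⊤) :
    ∃ P : EuclideanSpace ℝ (Fin 3) →ₗ[ℝ] EuclideanSpace ℝ (Fin 3),
      IsOrthProj P ∧ ∃ a b : Fin m → ℝ,
        IsParseval (fun i => a i • P (x i) + b i • (x i - P (x i))) := by
  have hE : Module.finrank ℝ (EuclideanSpace ℝ (Fin 3)) = 3 := finrank_euclideanSpace_fin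
  obtain ⟨g, hg⟩ := exists_linearIndependent_comp_fin hE hframe
  obtain ⟨w, hw⟩ := exists_isPiecewiseOrthogonal_span_singleton hE hg
  obtain ⟨α, β, hαβ⟩ := hw.exists_orthonormal
  have hg_inj : Function.Injective g := hg.injective.of_comp
  refine ⟨_, isOrthProj_starProjection (ℝ ∙ w), Function.extend g α 0, Function.extend g β 0, ?_⟩
  refine IsParseval.of_comp_injective hg_inj ?_ fun i hi => ?_
  · simpa [Function.comp_def, hg_inj.extend_apply] using isParseval_of_orthonormal hαβ (by simp)
  · simp [Function.extend_apply' _ _ _ hi]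
end
end

section
/- Let {x_i}_{i=1}^m be a unit-norm frame for ℝ⁴ and let 0 < ε < 1/8. If ‖x_i − x_j‖ < ε for all i ≠ j, then {x_i}_{i=1}^m is not piecewise scalable with any orthogonal projection of rank 2: for every orthogonal projection P on ℝ⁴ of rank 2 and all real constants a_1,...,a_m, b_1,...,b_m, the family {a_i P x_i + b_i (I−P) x_i}_{i=1}^m is not a Parseval frame for ℝ⁴. -/
open scoped RealInnerProductSpace
open Finset

noncomputable section

/-- In a 2-dimensional subspace of ℝ⁴ there is a unit vector orthogonal to any given vector. -/
lemma aux_exists_unit_orth (S : Submodule ℝ (EuclideanSpace ℝ (Fin 4)))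
    (hS : Module.finrank ℝ S = 2) (v : EuclideanSpace ℝ (Fin 4)) (hv : v ≠ 0) :
    ∃ z : EuclideanSpace ℝ (Fin 4), ‖z‖ = 1 ∧ z ∈ S ∧ ⟪z, v⟫ = 0 := by
  have hT : Module.finrank ℝ ((Submodule.span ℝ {v})ᗮ : Submodule ℝ (EuclideanSpace ℝ (Fin 4))) = 3 := by
    have h1 := Submodule.finrank_add_finrank_orthogonal (𝕜 := ℝ) (Submodule.span ℝ {v})
    rw [finrank_span_singleton hv, finrank_euclideanSpace_fin] at h1
    omega
  set T := (Submodule.span ℝ {v})ᗮ with hTdef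
  have hsum := Submodule.finrank_sup_add_finrank_inf_eq S T
  have hle : Module.finrank ℝ ↥(S ⊔ T) ≤ 4 :=
    le_of_le_of_eq (Submodule.finrank_le _) finrank_euclideanSpace_fin
  have hpos : 0 < Module.finrank ℝ ↥(S ⊓ T) := by omega
  have hne : (S ⊓ T) ≠ ⊥ := by
    intro h
    rw [h, finrank_bot] at hpos
    exact lt_irrefl 0 hpos
  obtain ⟨z, hzmem, hz0⟩ := Submodule.exists_mem_ne_zero_of_ne_bot hne
  refine ⟨‖z‖⁻¹ • z, ?_, S.smul_mem _ hzmem.1, ?_⟩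
  · rw [norm_smul, norm_inv, norm_norm, inv_mul_cancel₀ (norm_ne_zero_iff.2 hz0)]
  · have hzv : ⟪v, z⟫ = 0 :=
      hzmem.2 v (Submodule.mem_span_singleton_self v)
    rw [real_inner_smul_left, real_inner_comm, hzv, mul_zero]

lemma aux_sum_sq_ge {m : ℕ} (ε : ℝ) (hε : 0 < ε) (s t : Fin m → ℝ)
    (h1 : ∑ i, (s i * t i) ^ 2 = 1) (h2 : ∀ i, t i ^ 2 ≤ ε ^ 2) :
    1 / ε ^ 2 ≤ ∑ i, s i ^ 2 := by
  have key : (1 : ℝ) ≤ ε ^ 2 * ∑ i, s i ^ 2 := by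
    rw [Finset.mul_sum, ← h1]
    apply Finset.sum_le_sum
    intro i _
    have := h2 i
    nlinarith [sq_nonneg (s i)]
  rw [div_le_iff₀ (by positivity)]
  linarith

lemma aux_contra {m : ℕ} (ε r : ℝ) (hε : 0 < ε) (hr : 2 * ε < r) (s t : Fin m → ℝ)
    (h1 : ∑ i, (s i * t i) ^ 2 = 1) (h2 : ∀ i, (r - ε) ^ 2 ≤ t i ^ 2)
    (h3 : 1 / ε ^ 2 ≤ ∑ i, s i ^ 2) : False := by
  have hA : (r - ε) ^ 2 * ∑ i, s i ^ 2 ≤ ∑ i, (s i * t i) ^ 2 := by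
    rw [Finset.mul_sum]
    apply Finset.sum_le_sum
    intro i _
    have := h2 i
    nlinarith [sq_nonneg (s i)]
  have h4 : ε ^ 2 < (r - ε) ^ 2 := by nlinarith
  have h5 : (r - ε) ^ 2 * (1 / ε ^ 2) ≤ (r - ε) ^ 2 * ∑ i, s i ^ 2 :=
    mul_le_mul_of_nonneg_left h3 (sq_nonneg _)
  have hinv : ε ^ 2 * (1 / ε ^ 2) = 1 := by field_simp
  have h6 : ε ^ 2 * (1 / ε ^ 2) < (r - ε) ^ 2 * (1 / ε ^ 2) :=
    mul_lt_mul_of_pos_right h4 (by positivity)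
  linarith

set_option maxHeartbeats 1000000 in
theorem stmt13 {m : ℕ} (ε : ℝ) (hε0 : 0 < ε) (hε1 : ε < 1 / 8)
    (x : Fin m → EuclideanSpace ℝ (Fin 4))
    (hframe : Submodule.span ℝ (Set.range x) = ⊤)
    (hnorm : ∀ i, ‖x i‖ = 1)
    (hclose : ∀ i j, i ≠ j → ‖x i - x j‖ < ε)
    (P : EuclideanSpace ℝ (Fin 4) →ₗ[ℝ] EuclideanSpace ℝ (Fin 4))
    (hP : IsOrthProj P) (hrank : Module.finrank ℝ (LinearMap.range P) = 2)
    (a b : Fin m → ℝ) :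
    ¬ IsParseval (fun i => a i • P (x i) + b i • (x i - P (x i))) := by
  intro hpar
  have hsa := hP.2
  have hPP : ∀ v, P (P v) = P v := by
    intro v
    have := LinearMap.ext_iff.1 hP.1 v
    simpa using this
  -- m is positive
  have hm : 0 < m := by
    rcases Nat.eq_zero_or_pos m with h | h
    · exfalso
      subst h
      rw [Set.range_eq_empty, Submodule.span_empty] at hframe
      exact bot_ne_top hframe
    · exact h
  set i₀ : Fin m := ⟨0, hm⟩ with hi₀
  -- inner products with the Parseval vectors
  have hzy_range : ∀ z : EuclideanSpace ℝ (Fin 4), P z = z → ∀ i,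
      ⟪z, a i • P (x i) + b i • (x i - P (x i))⟫ = a i * ⟪z, x i⟫ := by
    intro z hz i
    rw [inner_add_right, real_inner_smul_right, real_inner_smul_right, inner_sub_right,
      ← hsa z (x i), hz]
    ring
  have hzy_ker : ∀ z : EuclideanSpace ℝ (Fin 4), P z = 0 → ∀ i,
      ⟪z, a i • P (x i) + b i • (x i - P (x i))⟫ = b i * ⟪z, x i⟫ := by
    intro z hz i
    rw [inner_add_right, real_inner_smul_right, real_inner_smul_right, inner_sub_right,
      ← hsa z (x i), hz, inner_zero_left]
    ring
  -- closeness of inner products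
  have hineq : ∀ z : EuclideanSpace ℝ (Fin 4), ‖z‖ = 1 → ∀ i,
      |⟪z, x i⟫ - ⟪z, x i₀⟫| ≤ ε := by
    intro z hz i
    rcases eq_or_ne i i₀ with h | h
    · rw [h, sub_self, abs_zero]; exact hε0.le
    · have heq : ⟪z, x i⟫ - ⟪z, x i₀⟫ = ⟪z, x i - x i₀⟫ := (inner_sub_right z _ _).symm
      rw [heq]
      calc |⟪z, x i - x i₀⟫| ≤ ‖z‖ * ‖x i - x i₀‖ := abs_real_inner_le_norm _ _
        _ = ‖x i - x i₀‖ := by rw [hz, one_mul]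
        _ ≤ ε := (hclose i i₀ h).le
  -- Parseval sum for a unit vector
  have hparsum : ∀ z : EuclideanSpace ℝ (Fin 4), ‖z‖ = 1 →
      ∑ i, ⟪z, a i • P (x i) + b i • (x i - P (x i))⟫ ^ 2 = 1 := by
    intro z hz
    have h := hpar z
    simp only at h
    rw [h, hz, one_pow]
  -- lower bound for ∑ a i ^ 2
  have ha : 1 / ε ^ 2 ≤ ∑ i, a i ^ 2 := by
    obtain ⟨z, hz1, hzS, hzx⟩ := aux_exists_unit_orth (LinearMap.range P) hrank (x i₀)
      (by intro h; have := hnorm i₀; rw [h, norm_zero] at this; norm_num at this)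
    have hzP : P z = z := by
      obtain ⟨w, hw⟩ := hzS
      rw [← hw, hPP]
    refine aux_sum_sq_ge ε hε0 a (fun i => ⟪z, x i⟫) ?_ ?_
    · rw [← hparsum z hz1]
      exact Finset.sum_congr rfl fun i _ => by rw [hzy_range z hzP i]
    · intro i
      have h := hineq z hz1 i
      rw [hzx, sub_zero] at h
      have := abs_le.1 h
      nlinarith [this.1, this.2]
  -- lower bound for ∑ b i ^ 2
  have hkerrank : Module.finrank ℝ (LinearMap.ker P) = 2 := by
    have := LinearMap.finrank_range_add_finrank_ker P
    rw [hrank, finrank_euclideanSpace_fin] at this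
    omega
  have hb : 1 / ε ^ 2 ≤ ∑ i, b i ^ 2 := by
    obtain ⟨z, hz1, hzS, hzx⟩ := aux_exists_unit_orth (LinearMap.ker P) hkerrank (x i₀)
      (by intro h; have := hnorm i₀; rw [h, norm_zero] at this; norm_num at this)
    have hzP : P z = 0 := hzS
    refine aux_sum_sq_ge ε hε0 b (fun i => ⟪z, x i⟫) ?_ ?_
    · rw [← hparsum z hz1]
      exact Finset.sum_congr rfl fun i _ => by rw [hzy_ker z hzP i]
    · intro i
      have h := hineq z hz1 i
      rw [hzx, sub_zero] at h
      have := abs_le.1 h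
      nlinarith [this.1, this.2]
  set c := ‖P (x i₀)‖ with hc_def
  set d := ‖x i₀ - P (x i₀)‖ with hd_def
  have hPx₀ : ⟪P (x i₀), x i₀⟫ = c ^ 2 := by
    have h1 := hsa (P (x i₀)) (x i₀)
    rw [hPP] at h1
    rw [h1, real_inner_self_eq_norm_sq]
  have hQx₀ : ⟪x i₀ - P (x i₀), x i₀⟫ = d ^ 2 := by
    have hPz : P (x i₀ - P (x i₀)) = 0 := by
      rw [map_sub, hPP, sub_self]
    have h2 : ⟪x i₀ - P (x i₀), P (x i₀)⟫ = 0 := by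
      rw [← hsa (x i₀ - P (x i₀)) (x i₀), hPz, inner_zero_left]
    rw [hd_def, ← real_inner_self_eq_norm_sq, inner_sub_right, h2, sub_zero]
  -- c ≤ 2ε
  have hc : c ≤ 2 * ε := by
    by_contra hc'
    push_neg at hc'
    have hcpos : 0 < c := lt_trans (by linarith) hc'
    set u : EuclideanSpace ℝ (Fin 4) := c⁻¹ • P (x i₀) with hu_def
    have hu1 : ‖u‖ = 1 := by
      rw [hu_def, norm_smul, norm_inv, Real.norm_eq_abs, abs_of_pos hcpos, ← hc_def,
        inv_mul_cancel₀ hcpos.ne']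
    have hPu : P u = u := by
      rw [hu_def, map_smul, hPP]
    have hux₀ : ⟪u, x i₀⟫ = c := by
      rw [hu_def, real_inner_smul_left, hPx₀]
      field_simp
    refine aux_contra ε c hε0 hc' a (fun i => ⟪u, x i⟫) ?_ ?_ ha
    · rw [← hparsum u hu1]
      exact Finset.sum_congr rfl fun i _ => by rw [hzy_range u hPu i]
    · intro i
      have h := hineq u hu1 i
      rw [hux₀] at h
      have h' := abs_le.1 h
      nlinarith [h'.1, h'.2]
  -- d ≤ 2ε
  have hd : d ≤ 2 * ε := by
    by_contra hd'
    push_neg at hd'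
    have hdpos : 0 < d := lt_trans (by linarith) hd'
    set w : EuclideanSpace ℝ (Fin 4) := d⁻¹ • (x i₀ - P (x i₀)) with hw_def
    have hw1 : ‖w‖ = 1 := by
      rw [hw_def, norm_smul, norm_inv, Real.norm_eq_abs, abs_of_pos hdpos, ← hd_def,
        inv_mul_cancel₀ hdpos.ne']
    have hPw : P w = 0 := by
      rw [hw_def, map_smul, map_sub, hPP, sub_self, smul_zero]
    have hwx₀ : ⟪w, x i₀⟫ = d := by
      rw [hw_def, real_inner_smul_left, hQx₀]
      field_simp
    refine aux_contra ε d hε0 hd' b (fun i => ⟪w, x i⟫) ?_ ?_ hb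
    · rw [← hparsum w hw1]
      exact Finset.sum_congr rfl fun i _ => by rw [hzy_ker w hPw i]
    · intro i
      have h := hineq w hw1 i
      rw [hwx₀] at h
      have h' := abs_le.1 h
      nlinarith [h'.1, h'.2]
  -- Pythagoras: c² + d² = 1, contradiction
  have hpyth : c ^ 2 + d ^ 2 = 1 := by
    have h1 : ⟪x i₀, x i₀⟫ = 1 := by
      rw [real_inner_self_eq_norm_sq, hnorm i₀, one_pow]
    have h2 := hQx₀
    rw [inner_sub_left, h1] at h2
    have h3 : ⟪x i₀, P (x i₀)⟫ = ⟪P (x i₀), x i₀⟫ := real_inner_comm _ _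
    linarith [hPx₀, h3, h2]
  have hcnn : 0 ≤ c := norm_nonneg _
  have hdnn : 0 ≤ d := norm_nonneg _
  nlinarith [hc, hd, hpyth, hε0, hε1]
end
end

section
/- Let {x_i}_{i=1}^m be a unit-norm frame for ℝⁿ and let 0 < ε < 1/64. Suppose ‖x_i − x_j‖ < ε for all i ≠ j. Then for every k with 2 ≤ k ≤ n−2, the frame {x_i}_{i=1}^m is not piecewise scalable with any orthogonal projection of rank k: for every orthogonal projection P on ℝⁿ of rank k and all real constants a_1,...,a_m, b_1,...,b_m, the family {a_i P x_i + b_i (I−P) x_i}_{i=1}^m is not a Parseval frame for ℝⁿ. -/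
/-!
Fix one frame vector `u = x i₀`. On `range P` the Parseval identity only sees the vectors
`a i • P (x i)`, and all the `P (x i)` lie within `ε` of `P u`. In a space of dimension at least
two this forces `‖P u‖ ≤ 2ε`: testing the identity against a unit vector orthogonal to `P u`
gives `∑ a i ^ 2 ≥ 1 / ε²`, while testing it against `P u` gives
`∑ a i ^ 2 ≤ 1 / (‖P u‖ - ε)²`. The same argument on `ker P = range (1 - P)`, of dimension
`n - k ≥ 2`, gives `‖u - P u‖ ≤ 2ε`, and then `1 = ‖P u‖² + ‖u - P u‖² ≤ 8ε² < 1`.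
-/

open scoped RealInnerProductSpace
open Finset

noncomputable section

open LinearMap Module

variable {E ι : Type*} [NormedAddCommGroup E] [InnerProductSpace ℝ E] [Fintype ι]

namespace LinearMap.IsSymmetricProjection

variable {P : E →ₗ[ℝ] E}

theorem one_sub (hP : P.IsSymmetricProjection) : (1 - P).IsSymmetricProjection :=
  ⟨hP.isIdempotentElem.one_sub, IsSymmetric.one.sub hP.isSymmetric⟩

theorem inner_apply_sub_apply (hP : P.IsSymmetricProjection) (x y : E) :
    ⟪P x, y - P y⟫ = 0 := by
  rw [inner_sub_right, hP.isSymmetric x (P y), ← Module.End.mul_apply, hP.isIdempotentElem.eq,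
    hP.isSymmetric, sub_self]

theorem norm_sq_eq_norm_sq_apply_add_norm_sq_sub_apply (hP : P.IsSymmetricProjection) (x : E) :
    ‖x‖ ^ 2 = ‖P x‖ ^ 2 + ‖x - P x‖ ^ 2 := by
  simpa [sq] using norm_add_sq_eq_norm_sq_add_norm_sq_real (hP.inner_apply_sub_apply x x)

theorem norm_apply_le (hP : P.IsSymmetricProjection) (x : E) : ‖P x‖ ≤ ‖x‖ := by
  have := hP.norm_sq_eq_norm_sq_apply_add_norm_sq_sub_apply x
  nlinarith [norm_nonneg x, norm_nonneg (P x), sq_nonneg ‖x - P x‖]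

end LinearMap.IsSymmetricProjection

theorem Submodule.exists_mem_norm_eq_one_inner_eq_zero {W : Submodule ℝ E}
    (hW : 1 < finrank ℝ W) (p : E) : ∃ w ∈ W, ⟪w, p⟫ = 0 ∧ ‖w‖ = 1 := by
  have : FiniteDimensional ℝ W := Module.finite_of_finrank_pos (by omega)
  let f : W →ₗ[ℝ] ℝ := (innerₛₗ ℝ p).comp W.subtype
  obtain ⟨z, hz, hz0⟩ :=
    Submodule.exists_mem_ne_zero_of_ne_bot (f.ker_ne_bot_of_finrank_lt (by rwa [finrank_self]))
  have hz0' : (z : E) ≠ 0 := by simpa using hz0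
  refine ⟨‖(z : E)‖⁻¹ • (z : E), W.smul_mem _ z.2, ?_, norm_smul_inv_norm hz0'⟩
  rw [real_inner_smul_left, real_inner_comm]
  simp [show ⟪p, (z : E)⟫ = 0 from hz]

theorem Submodule.norm_le_two_mul_of_sum_sq_inner_eq {W : Submodule ℝ E}
    (hW : 1 < finrank ℝ W) {p : E} (hp : p ∈ W) {v : ι → E} {c : ι → ℝ} {ε : ℝ}
    (hv : ∀ i, ‖v i - p‖ ≤ ε) (hpar : ∀ y ∈ W, ∑ i, (c i * ⟪y, v i⟫) ^ 2 = ‖y‖ ^ 2) :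
    ‖p‖ ≤ 2 * ε := by
  set S := ∑ i, c i ^ 2
  obtain ⟨w, hwW, hwp, hw1⟩ := W.exists_mem_norm_eq_one_inner_eq_zero hW p
  have hS : 1 ≤ S * ε ^ 2 := by
    calc (1 : ℝ) = ∑ i, (c i * ⟪w, v i - p⟫) ^ 2 := by
          simpa [inner_sub_right, hwp, hw1] using (hpar w hwW).symm
      _ ≤ ∑ i, c i ^ 2 * ε ^ 2 := by
          refine Finset.sum_le_sum fun i _ => ?_
          have h : |⟪w, v i - p⟫| ≤ ε :=
            (abs_real_inner_le_norm _ _).trans (by rw [hw1, one_mul]; exact hv i)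
          rw [mul_pow, ← sq_abs ⟪w, v i - p⟫]
          exact mul_le_mul_of_nonneg_left (pow_le_pow_left₀ (abs_nonneg _) h 2) (sq_nonneg _)
      _ = S * ε ^ 2 := by rw [Finset.sum_mul]
  have hS0 : S ≠ 0 := by
    rintro h
    rw [h, zero_mul] at hS
    norm_num at hS
  obtain ⟨i₀, -, -⟩ := Finset.exists_ne_zero_of_sum_ne_zero hS0
  have hε : 0 ≤ ε := (norm_nonneg _).trans (hv i₀)
  by_contra! hlt
  have hinner : ∀ i, ‖p‖ * (‖p‖ - ε) ≤ ⟪p, v i⟫ := fun i => by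
    have h := neg_le_of_abs_le ((abs_real_inner_le_norm p (v i - p)).trans
      (mul_le_mul_of_nonneg_left (hv i) (norm_nonneg p)))
    rw [inner_sub_right, real_inner_self_eq_norm_sq] at h
    linarith
  have hpS : S * (‖p‖ * (‖p‖ - ε)) ^ 2 ≤ ‖p‖ ^ 2 := by
    calc S * (‖p‖ * (‖p‖ - ε)) ^ 2 = ∑ i, (c i * (‖p‖ * (‖p‖ - ε))) ^ 2 := by
          rw [Finset.sum_mul]; simp only [mul_pow]
      _ ≤ ∑ i, (c i * ⟪p, v i⟫) ^ 2 := by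
          refine Finset.sum_le_sum fun i _ => ?_
          rw [mul_pow, mul_pow (c i)]
          refine mul_le_mul_of_nonneg_left (pow_le_pow_left₀ ?_ (hinner i) 2) (sq_nonneg _)
          exact mul_nonneg (norm_nonneg p) (by linarith)
      _ = ‖p‖ ^ 2 := hpar p hp
  have hp0 : 0 < ‖p‖ := by linarith
  have hSpos : 0 < S := lt_of_le_of_ne (Finset.sum_nonneg fun i _ => sq_nonneg (c i)) hS0.symm
  have hsq : (‖p‖ * ε) ^ 2 < (‖p‖ * (‖p‖ - ε)) ^ 2 := by gcongr; linarith
  refine lt_irrefl (‖p‖ ^ 2) ?_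
  calc ‖p‖ ^ 2 ≤ S * (‖p‖ * ε) ^ 2 := by nlinarith
    _ < S * (‖p‖ * (‖p‖ - ε)) ^ 2 := mul_lt_mul_of_pos_left hsq hSpos
    _ ≤ ‖p‖ ^ 2 := hpS

theorem LinearMap.IsSymmetricProjection.norm_apply_le_two_mul_of_parseval {P : E →ₗ[ℝ] E}
    (hP : P.IsSymmetricProjection) (hrank : 1 < finrank ℝ (range P)) {x : ι → E} {a b : ι → ℝ}
    (hpar : ∀ y, ∑ i, ⟪y, a i • P (x i) + b i • (x i - P (x i))⟫ ^ 2 = ‖y‖ ^ 2)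
    {u : E} {ε : ℝ} (hclose : ∀ i, ‖x i - u‖ ≤ ε) : ‖P u‖ ≤ 2 * ε := by
  refine (range P).norm_le_two_mul_of_sum_sq_inner_eq hrank (mem_range_self P u)
    (v := fun i => P (x i)) (c := a) (fun i => ?_) ?_
  · rw [← map_sub]
    exact (hP.norm_apply_le _).trans (hclose i)
  · rintro _ ⟨z, rfl⟩
    rw [← hpar]
    refine Finset.sum_congr rfl fun i _ => ?_
    rw [inner_add_right, real_inner_smul_right, real_inner_smul_right,
      hP.inner_apply_sub_apply, mul_zero, add_zero, mul_comm]

theorem IsParseval.nonempty {n : ℕ} {ι : Type} [Fintype ι] {v : ι → EuclideanSpace ℝ (Fin n)}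
    (hv : IsParseval v) (hn : 0 < n) : Nonempty ι := by
  by_contra h
  rw [not_nonempty_iff] at h
  simpa using hv (EuclideanSpace.single ⟨0, hn⟩ 1)

theorem stmt15_general {m n : ℕ} (ε : ℝ) (hε0 : 0 < ε) (hε1 : ε < 1 / 64)
    (x : Fin m → EuclideanSpace ℝ (Fin n))
    (hnorm : ∀ i, ‖x i‖ = 1)
    (hclose : ∀ i j, i ≠ j → ‖x i - x j‖ < ε)
    (k : ℕ) (hk2 : 2 ≤ k) (hkn : k ≤ n - 2)
    (P : EuclideanSpace ℝ (Fin n) →ₗ[ℝ] EuclideanSpace ℝ (Fin n))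
    (hP : IsOrthProj P) (hrank : Module.finrank ℝ (LinearMap.range P) = k)
    (a b : Fin m → ℝ) :
    ¬ IsParseval (fun i => a i • P (x i) + b i • (x i - P (x i))) := by
  intro hpar
  have hP' : P.IsSymmetricProjection := ⟨hP.1, hP.2⟩
  obtain ⟨i₀⟩ := hpar.nonempty (by omega)
  have hcl : ∀ i, ‖x i - x i₀‖ ≤ ε := fun i => by
    rcases eq_or_ne i i₀ with rfl | h
    · simpa using hε0.le
    · exact (hclose i i₀ h).le
  simp only [IsParseval] at hpar
  have hrank_one_sub : finrank ℝ (range (1 - P)) = n - k := by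
    have := P.finrank_range_add_finrank_ker
    rw [finrank_euclideanSpace_fin, hrank, hP'.isIdempotentElem.ker_eq_range_one_sub] at this
    omega
  have hPu := hP'.norm_apply_le_two_mul_of_parseval (by omega) hpar hcl
  -- `a i • P + b i • (1 - P)` is also `b i • (1 - P) + a i • (1 - (1 - P))`.
  have hQu := hP'.one_sub.norm_apply_le_two_mul_of_parseval (a := b) (b := a) (by omega)
    (by simpa [add_comm] using hpar) hcl
  have hpyth := hP'.norm_sq_eq_norm_sq_apply_add_norm_sq_sub_apply (x i₀)
  rw [hnorm] at hpyth
  simp only [LinearMap.sub_apply, Module.End.one_apply] at hQu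
  nlinarith [norm_nonneg (P (x i₀)), norm_nonneg (x i₀ - P (x i₀))]

theorem stmt15 {m n : ℕ} (ε : ℝ) (hε0 : 0 < ε) (hε1 : ε < 1 / 64)
    (x : Fin m → EuclideanSpace ℝ (Fin n))
    (hframe : Submodule.span ℝ (Set.range x) = ⊤)
    (hnorm : ∀ i, ‖x i‖ = 1)
    (hclose : ∀ i j, i ≠ j → ‖x i - x j‖ < ε)
    (k : ℕ) (hk2 : 2 ≤ k) (hkn : k ≤ n - 2)
    (P : EuclideanSpace ℝ (Fin n) →ₗ[ℝ] EuclideanSpace ℝ (Fin n))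
    (hP : IsOrthProj P) (hrank : Module.finrank ℝ (LinearMap.range P) = k)
    (a b : Fin m → ℝ) :
    ¬ IsParseval (fun i => a i • P (x i) + b i • (x i - P (x i))) :=
  stmt15_general ε hε0 hε1 x hnorm hclose k hk2 hkn P hP hrank a b
end
end

section
/- Let {x_i}_{i=1}^m be a unit-norm frame for ℝⁿ. If {x_i}_{i=1}^m is piecewise scalable with an orthogonal projection P and real constants {a_i, b_i}_{i=1}^m (i.e., {a_i P x_i + b_i (I−P) x_i}_{i=1}^m is a Parseval frame for ℝⁿ), then n ≤ Σ_{i=1}^m max(a_i², b_i²). -/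
open scoped RealInnerProductSpace
open Finset

noncomputable section

theorem stmt18 {m n : ℕ} (x : Fin m → EuclideanSpace ℝ (Fin n))
    (hframe : Submodule.span ℝ (Set.range x) = ⊤)
    (hnorm : ∀ i, ‖x i‖ = 1)
    (P : EuclideanSpace ℝ (Fin n) →ₗ[ℝ] EuclideanSpace ℝ (Fin n))
    (hP : IsOrthProj P) (a b : Fin m → ℝ)
    (hpar : IsParseval (fun i => a i • P (x i) + b i • (x i - P (x i)))) :
    (n : ℝ) ≤ ∑ i, max (a i ^ 2) (b i ^ 2) := by
  set v : Fin m → EuclideanSpace ℝ (Fin n) :=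
    fun i => a i • P (x i) + b i • (x i - P (x i)) with hv
  -- orthogonality of P x and x - P x
  have hPP : ∀ u, P (P u) = P u := fun u => by
    have := congrArg (fun f => f u) hP.1; simpa using this
  have horth : ∀ i : Fin m, ⟪P (x i), x i - P (x i)⟫ = 0 := by
    intro i
    rw [inner_sub_right, hP.2, hP.2, hPP]
    ring
  -- trace identity: ∑ ‖v i‖² = n
  have htrace : ∑ i, ‖v i‖ ^ 2 = (n : ℝ) := by
    have key : ∀ w : EuclideanSpace ℝ (Fin n), ‖w‖ ^ 2 = ∑ j, (w j) ^ 2 := by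
      intro w
      rw [EuclideanSpace.norm_eq]
      rw [Real.sq_sqrt (by positivity)]
      simp [sq_abs]
    have hsingle : ∀ (j : Fin n) (w : EuclideanSpace ℝ (Fin n)),
        ⟪(EuclideanSpace.single j (1:ℝ) : EuclideanSpace ℝ (Fin n)), w⟫ = w j := by
      intro j w
      simp [EuclideanSpace.inner_single_left]
    calc ∑ i, ‖v i‖ ^ 2 = ∑ i, ∑ j, (v i j) ^ 2 := by
          exact Finset.sum_congr rfl fun i _ => key (v i)
      _ = ∑ j, ∑ i, (v i j) ^ 2 := Finset.sum_comm
      _ = ∑ j : Fin n, ‖(EuclideanSpace.single j (1:ℝ) : EuclideanSpace ℝ (Fin n))‖ ^ 2 := by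
          refine Finset.sum_congr rfl fun j _ => ?_
          rw [← hpar (EuclideanSpace.single j (1:ℝ))]
          refine Finset.sum_congr rfl fun i _ => ?_
          rw [hsingle]
      _ = ∑ j : Fin n, (1:ℝ) := by
          refine Finset.sum_congr rfl fun j _ => ?_
          rw [EuclideanSpace.norm_single]; norm_num
      _ = (n : ℝ) := by simp
  rw [← htrace]
  refine Finset.sum_le_sum fun i _ => ?_
  have hnv : ‖v i‖ ^ 2 = a i ^ 2 * ‖P (x i)‖ ^ 2 + b i ^ 2 * ‖x i - P (x i)‖ ^ 2 := by
    have : ⟪a i • P (x i), b i • (x i - P (x i))⟫ = 0 := by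
      rw [real_inner_smul_left, real_inner_smul_right, horth i]; ring
    rw [hv]
    simp only
    rw [norm_add_sq_real, this, norm_smul, norm_smul]
    simp [mul_pow, sq_abs]
  have hpyth : ‖P (x i)‖ ^ 2 + ‖x i - P (x i)‖ ^ 2 = 1 := by
    have : ‖P (x i) + (x i - P (x i))‖ ^ 2 = ‖P (x i)‖ ^ 2 + ‖x i - P (x i)‖ ^ 2 := by
      rw [norm_add_sq_real, horth i]; ring
    rw [← this]
    simp [hnorm i]
  rw [hnv]
  have h1 : a i ^ 2 ≤ max (a i ^ 2) (b i ^ 2) := le_max_left _ _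
  have h2 : b i ^ 2 ≤ max (a i ^ 2) (b i ^ 2) := le_max_right _ _
  calc a i ^ 2 * ‖P (x i)‖ ^ 2 + b i ^ 2 * ‖x i - P (x i)‖ ^ 2
      ≤ max (a i ^ 2) (b i ^ 2) * ‖P (x i)‖ ^ 2 + max (a i ^ 2) (b i ^ 2) * ‖x i - P (x i)‖ ^ 2 := by
        gcongr <;> positivity
    _ = max (a i ^ 2) (b i ^ 2) * (‖P (x i)‖ ^ 2 + ‖x i - P (x i)‖ ^ 2) := by ring
    _ = max (a i ^ 2) (b i ^ 2) := by rw [hpyth, mul_one]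
end
end
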